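/- arXiv:2603.13216 — 8 statements merged into one kernel-verified Lean document; each statement's English description precedes it below -/
import Mathlib

section
/- Let n, k ≥ 2, let f₁(x₁,…,xₙ) = (x₁^k, x₂, …, xₙ) be the canonical k-fold on (ℂⁿ,0), and let φ₁(x₁,…,xₙ) = (λx₁, x₂, …, xₙ) where λ = e^{2πi/k}. If ρ is a reflection on (ℂⁿ,0) such that f₁ ∘ ρ = f₁ as germs, then there exists j ∈ {1, …, k−1} such that ρ = φ₁^j as germs (i.e. ρ belongs to the cyclic group generated by φ₁). -/
noncomputable section

open Filter Function

/-- ℂⁿ as the space of functions `Fin n → ℂ`. -/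
abbrev Cn (n : ℕ) : Type := Fin n → ℂ

/-- Equality of germs at 0 of maps (ℂⁿ,0) → (ℂⁿ,0). -/
def GermEq {n : ℕ} (f g : Cn n → Cn n) : Prop := f =ᶠ[nhds 0] g

/-- Germ at 0 of a holomorphic map (ℂⁿ,0) → (ℂⁿ,0): holomorphic on a
neighborhood of 0 and sending 0 to 0. -/
def IsHoloGerm {n : ℕ} (f : Cn n → Cn n) : Prop :=
  f 0 = 0 ∧ ∀ᶠ x in nhds (0 : Cn n), AnalyticAt ℂ f x

/-- Germ of biholomorphism on (ℂⁿ,0): holomorphic germ with invertible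
derivative at 0. -/
def IsBiholGerm {n : ℕ} (h : Cn n → Cn n) : Prop :=
  IsHoloGerm h ∧ IsUnit (fderiv ℂ h 0)

/-- φ has order exactly r as a germ at 0 (φ^[r] = id as germs, r minimal). -/
def HasOrderGerm {n : ℕ} (φ : Cn n → Cn n) (r : ℕ) : Prop :=
  GermEq (φ^[r]) id ∧ ∀ m : ℕ, 0 < m → m < r → ¬ GermEq (φ^[m]) id

/-- The fixed-point set of φ near 0 is a complex submanifold of codimension 1:
locally the zero set of a holomorphic submersion F : (ℂⁿ,0) → (ℂ,0). -/
def FixIsHypersurface {n : ℕ} (φ : Cn n → Cn n) : Prop :=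
  ∃ F : Cn n → ℂ, F 0 = 0 ∧ AnalyticAt ℂ F 0 ∧ fderiv ℂ F 0 ≠ 0 ∧
    ∀ᶠ x in nhds (0 : Cn n), (φ x = x ↔ F x = 0)

/-- A reflection on (ℂⁿ,0): germ of biholomorphism of finite order ≥ 2 whose
fixed-point set is a codimension-1 complex submanifold. -/
def IsReflection {n : ℕ} (φ : Cn n → Cn n) : Prop :=
  IsBiholGerm φ ∧ (∃ r : ℕ, 2 ≤ r ∧ HasOrderGerm φ r) ∧ FixIsHypersurface φ

/-- A reflection of order exactly k. -/
def IsReflectionOfOrder {n : ℕ} (φ : Cn n → Cn n) (k : ℕ) : Prop :=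
  IsBiholGerm φ ∧ HasOrderGerm φ k ∧ FixIsHypersurface φ

/-- The canonical k-fold f₁(x) = (x₁^k, x₂, …, xₙ). -/
def canonFold (n k : ℕ) : Cn n → Cn n := fun x i => if (i : ℕ) = 0 then x i ^ k else x i

/-- The canonical reflection φ₁(x) = (λ x₁, x₂, …, xₙ) with λ = e^{2πi/k}. -/
def canonRefl (n k : ℕ) : Cn n → Cn n :=
  fun x i => if (i : ℕ) = 0 then Complex.exp (2 * (Real.pi : ℂ) * Complex.I / (k : ℂ)) * x i
    else x i

/-- f is a k-fold: a holomorphic germ 𝒜-equivalent to the canonical k-fold,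
i.e. f = l ∘ f₁ ∘ h⁻¹ as germs for germs of biholomorphisms h, l
(equivalently, f ∘ h = l ∘ f₁ as germs). -/
def IsKFold {n : ℕ} (k : ℕ) (f : Cn n → Cn n) : Prop :=
  IsHoloGerm f ∧ ∃ h l : Cn n → Cn n, IsBiholGerm h ∧ IsBiholGerm l ∧
    GermEq (f ∘ h) (l ∘ canonFold n k)

/-- The canonical k-fold in the i-th coordinate: fᵢ(x) = (x₁, …, xᵢ^k, …, xₙ). -/
def foldAt (n k : ℕ) (i : Fin n) : Cn n → Cn n := fun x j => if j = i then x j ^ k else x j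

/-! Near 0, `f₁ ∘ ρ = f₁` forces `ρ` to fix every coordinate but the first, where
`ρ(x)₁ ^ k = x₁ ^ k`. Off the hyperplane `x₁ = 0`, which has real codimension 2 and so does not
disconnect a ball, the ratio `ρ(x)₁ / x₁` is a continuous function with values in the finite set
of `k`-th roots of unity, hence a constant `λ ^ j`. Then `ρ = φ₁ ^ j`, and `j ≠ 0` because `ρ`
is not the identity. -/

open Metric Set

theorem isPathConnected_ball_diff_center {E : Type*} [NormedAddCommGroup E] [NormedSpace ℝ E]
    (h : 1 < Module.rank ℝ E) (x : E) {r : ℝ} (hr : 0 < r) :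
    IsPathConnected (ball x r \ {x}) := by
  let f : E → E := fun y ↦ x + (r / (1 + ‖y‖)) • y
  have hf : Continuous f := continuous_const.add <|
    (continuous_const.div (continuous_const.add continuous_norm)
      fun y ↦ (by positivity : 0 < 1 + ‖y‖).ne').smul continuous_id
  suffices f '' {0}ᶜ = ball x r \ {x} from
    this ▸ (isPathConnected_compl_singleton_of_one_lt_rank h 0).image hf
  apply Subset.antisymm
  · rintro - ⟨y, hy, rfl⟩
    refine ⟨?_, ?_⟩
    · rw [mem_ball_iff_norm, add_sub_cancel_left, norm_smul, Real.norm_of_nonneg (by positivity),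
        div_mul_eq_mul_div, div_lt_iff₀ (by positivity)]
      nlinarith
    · simpa [f, hr.ne', (by positivity : 1 + ‖y‖ ≠ 0)] using hy
  · rintro z ⟨hz, hzx⟩
    have hsr : ‖z - x‖ < r := mem_ball_iff_norm.1 hz
    refine ⟨(r - ‖z - x‖)⁻¹ • (z - x), by simp [sub_ne_zero.2 hzx, (sub_pos.2 hsr).ne'], ?_⟩
    simp only [f, norm_smul, norm_inv, Real.norm_of_nonneg (sub_pos.2 hsr).le, smul_smul]
    rw [show r / (1 + (r - ‖z - x‖)⁻¹ * ‖z - x‖) * (r - ‖z - x‖)⁻¹ = 1 by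
      field_simp [(sub_pos.2 hsr).ne']; ring_nf; field_simp, one_smul, add_sub_cancel]

theorem isPreconnected_ball_inter_apply_ne {ι E : Type*} [Fintype ι] [NormedAddCommGroup E]
    [NormedSpace ℝ E] (h : 1 < Module.rank ℝ E) (x : ι → E) (i : ι) {r : ℝ} (hr : 0 < r) :
    IsPreconnected (ball x r ∩ {y | y i ≠ x i}) := by
  classical
  have hpi : ball x r ∩ {y | y i ≠ x i} =
      univ.pi (Function.update (fun j ↦ ball (x j) r) i (ball (x i) r \ {x i})) := by
    ext y
    simp only [ball_pi x hr, mem_inter_iff, mem_univ_pi]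
    constructor
    · rintro ⟨hy, hyi⟩ j
      rcases eq_or_ne j i with rfl | hj
      · simpa using ⟨hy j, hyi⟩
      · simpa [hj] using hy j
    · intro hy
      have hyi := hy i
      rw [update_self] at hyi
      refine ⟨fun j ↦ ?_, hyi.2⟩
      rcases eq_or_ne j i with rfl | hj
      · exact hyi.1
      · simpa [hj] using hy j
  rw [hpi]
  refine isPreconnected_univ_pi fun j ↦ ?_
  rcases eq_or_ne j i with rfl | hj
  · simpa using (isPathConnected_ball_diff_center h (x j) hr).isConnected.isPreconnected
  · simpa [hj] using isPreconnected_ball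

theorem exists_pow_eq_one_forall_eq_mul {X 𝕜 : Type*} [TopologicalSpace X] [NormedField 𝕜]
    {s : Set X} {f g : X → 𝕜} {k : ℕ} (hk : k ≠ 0) (hf : ContinuousOn f s)
    (hg : ContinuousOn g s) (hs : IsPreconnected (s ∩ {x | f x ≠ 0}))
    (hfg : ∀ x ∈ s, g x ^ k = f x ^ k) : ∃ c : 𝕜, c ^ k = 1 ∧ ∀ x ∈ s, g x = c * f x := by
  have hg0 : ∀ x ∈ s, f x = 0 → g x = 0 := fun x hx hfx ↦
    pow_eq_zero_iff hk |>.1 <| by rw [hfg x hx, hfx, zero_pow hk]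
  rcases (s ∩ {x | f x ≠ 0}).eq_empty_or_nonempty with hempty | ⟨x₀, hx₀⟩
  · refine ⟨1, one_pow k, fun x hx ↦ ?_⟩
    have hfx : f x = 0 := by_contra fun hfx ↦ hempty.subset ⟨hx, hfx⟩
    rw [hg0 x hx hfx, hfx, mul_zero]
  have hroots : IsDiscrete {z : 𝕜 | z ^ k = 1} :=
    Finite.isDiscrete <| (Polynomial.nthRootsFinset k (1 : 𝕜)).finite_toSet.subset fun z hz ↦
      (Polynomial.mem_nthRootsFinset (Nat.pos_of_ne_zero hk) 1).2 hz
  have hmaps : MapsTo (fun x ↦ g x / f x) (s ∩ {x | f x ≠ 0}) {z | z ^ k = 1} :=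
    fun x hx ↦ by simp [div_pow, hfg x hx.1, div_self (pow_ne_zero k hx.2)]
  have hcont : ContinuousOn (fun x ↦ g x / f x) (s ∩ {x | f x ≠ 0}) :=
    (hg.mono inter_subset_left).div (hf.mono inter_subset_left) fun x hx ↦ hx.2
  refine ⟨g x₀ / f x₀, hmaps hx₀, fun x hx ↦ ?_⟩
  by_cases hfx : f x = 0
  · rw [hg0 x hx hfx, hfx, mul_zero]
  · rw [← hs.constant_of_mapsTo hroots hcont hmaps ⟨hx, hfx⟩ hx₀, div_mul_cancel₀ _ hfx]

section CanonicalFold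

variable {n k : ℕ}

theorem canonRefl_iterate_apply (m : ℕ) (x : Cn n) (i : Fin n) :
    (canonRefl n k)^[m] x i = if (i : ℕ) = 0 then
      Complex.exp (2 * (Real.pi : ℂ) * Complex.I / (k : ℂ)) ^ m * x i else x i := by
  induction m generalizing x with
  | zero => simp
  | succ m ih =>
    rw [Function.iterate_succ_apply, ih]
    split_ifs with hi <;> simp [canonRefl, hi, pow_succ, mul_assoc]

theorem pow_apply_eq_pow_of_canonFold_eq {x y : Cn n} (h : canonFold n k x = canonFold n k y)
    {i : Fin n} (hi : (i : ℕ) = 0) : x i ^ k = y i ^ k := by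
  simpa [canonFold, hi] using congrFun h i

theorem apply_eq_of_canonFold_eq {x y : Cn n} (h : canonFold n k x = canonFold n k y)
    {i : Fin n} (hi : (i : ℕ) ≠ 0) : x i = y i := by
  simpa [canonFold, hi] using congrFun h i

end CanonicalFold

/-- Lemma 2.4: any reflection associated with the canonical k-fold
f₁ belongs to the cyclic group generated by the canonical reflection φ₁. -/
theorem stmt_0 (n k : ℕ) (hn : 2 ≤ n) (hk : 2 ≤ k)
    (ρ : Cn n → Cn n) (hρ : IsReflection ρ)
    (hassoc : GermEq (canonFold n k ∘ ρ) (canonFold n k)) :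
    ∃ j : ℕ, 1 ≤ j ∧ j ≤ k - 1 ∧ GermEq ρ ((canonRefl n k)^[j]) := by
  obtain ⟨⟨⟨-, hρan⟩, -⟩, ⟨r, hr, -, hord⟩, -⟩ := hρ
  have hk0 : k ≠ 0 := by omega
  have : NeZero k := ⟨hk0⟩
  let i₀ : Fin n := ⟨0, by omega⟩
  obtain ⟨ε, hε, hball⟩ := Metric.eventually_nhds_iff_ball.1 (hρan.and hassoc)
  obtain ⟨c, hck, hc⟩ := exists_pow_eq_one_forall_eq_mul (s := ball 0 ε)
    (f := fun x : Cn n ↦ x i₀) (g := fun x ↦ ρ x i₀) hk0 (continuous_apply i₀).continuousOn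
    (fun x hx ↦
      ((continuous_apply i₀).continuousAt.comp (hball x hx).1.continuousAt).continuousWithinAt)
    (isPreconnected_ball_inter_apply_ne (by simp [Complex.rank_real_complex]) 0 i₀ hε)
    (fun x hx ↦ pow_apply_eq_pow_of_canonFold_eq (hball x hx).2 rfl)
  obtain ⟨j, hjk, rfl⟩ := (Complex.isPrimitiveRoot_exp k hk0).eq_pow_of_pow_eq_one hck
  have hρj : GermEq ρ ((canonRefl n k)^[j]) := by
    filter_upwards [ball_mem_nhds (0 : Cn n) hε] with x hx
    funext i
    rw [canonRefl_iterate_apply]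
    split_ifs with hi
    · obtain rfl : i = i₀ := Fin.ext hi
      exact hc x hx
    · exact apply_eq_of_canonFold_eq (hball x hx).2 hi
  have hj : j ≠ 0 := by
    rintro rfl
    exact hord 1 one_pos (by omega) (by simpa using hρj)
  exact ⟨j, by omega, by omega, hρj⟩
end
end

section
/- Let n, k ≥ 2, let f be a k-fold on (ℂⁿ,0) and let φ be a reflection on (ℂⁿ,0) associated with f (i.e. f ∘ φ = f as germs). Then the singular set of f coincides with the fixed-point set of φ as germs of sets at 0: there is a neighborhood U of 0 in ℂⁿ such that {x ∈ U : the derivative df(x) is not invertible} = {x ∈ U : φ(x) = x}. -/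
noncomputable section

open Filter Function

open Topology

/-! Pull everything back along the source coordinate change `h` of the fold,
`f ∘ h = l ∘ f₁`. There `Σ(f)` becomes the critical hyperplane `{y₀ = 0}` of `f₁`, and `Fix(φ)`
becomes the smooth hypersurface `{F ∘ h = 0}`. Near a point where `df` is invertible `f` is
locally injective, so `f ∘ φ = f` forces `φ = id` nearby: a fixed point outside `Σ(f)` would be
an interior point of `Fix(φ)`, which a hypersurface does not have (identity theorem). So the
hypersurface lies in the hyperplane, and a smooth hypersurface through `0` contained in a
hyperplane coincides with it near `0`. -/

section ReplaceCoord

variable {𝕜 : Type*} [NontriviallyNormedField 𝕜] {ι : Type*} [DecidableEq ι]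

namespace ContinuousLinearMap

def replaceCoord (j : ι) (T : (ι → 𝕜) →L[𝕜] 𝕜) : (ι → 𝕜) →L[𝕜] (ι → 𝕜) :=
  pi (update (fun i => proj i) j T)

@[simp]
theorem replaceCoord_apply (j : ι) (T : (ι → 𝕜) →L[𝕜] 𝕜) (v : ι → 𝕜) :
    replaceCoord j T v = update v j (T v) := by
  ext i
  simp [replaceCoord, apply_update (fun i (S : (ι → 𝕜) →L[𝕜] 𝕜) => S v)]

theorem injective_replaceCoord_iff {j : ι} {T : (ι → 𝕜) →L[𝕜] 𝕜} :
    Injective (replaceCoord j T) ↔ T (Pi.single j 1) ≠ 0 := by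
  constructor
  · intro hinj hT
    have : replaceCoord j T (Pi.single j 1) = replaceCoord j T 0 := by
      rw [replaceCoord_apply, replaceCoord_apply, hT, map_zero, Pi.single, update_idem]
    simpa using congrFun (hinj this) j
  · intro hT
    rw [injective_iff_map_eq_zero]
    intro v hv
    have hv_eq : v = v j • Pi.single j 1 := by
      ext i
      by_cases hi : i = j
      · subst hi; simp
      · simpa [hi] using congrFun hv i
    have hTv : T v = 0 := by simpa using congrFun hv j
    rw [hv_eq, map_smul, smul_eq_mul] at hTv
    rw [hv_eq, (mul_eq_zero.mp hTv).resolve_right hT, zero_smul]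

theorem exists_apply_single_ne_zero [Fintype ι] {T : (ι → 𝕜) →L[𝕜] 𝕜} (hT : T ≠ 0) :
    ∃ j, T (Pi.single j 1) ≠ 0 := by
  by_contra! h
  refine hT (ContinuousLinearMap.coe_injective (LinearMap.pi_ext fun j x => ?_))
  have hx : (Pi.single j x : ι → 𝕜) = x • Pi.single j 1 := by simp [← Pi.single_smul]
  simp [hx, h j]

theorem isUnit_replaceCoord_iff [Fintype ι] [CompleteSpace 𝕜] {j : ι} {T : (ι → 𝕜) →L[𝕜] 𝕜} :
    IsUnit (replaceCoord j T) ↔ T (Pi.single j 1) ≠ 0 := by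
  rw [isUnit_iff_bijective, Bijective, ← injective_replaceCoord_iff, and_iff_left_iff_imp]
  exact LinearMap.injective_iff_surjective.mp

end ContinuousLinearMap

theorem HasStrictFDerivAt.replaceCoord [Fintype ι] {G : (ι → 𝕜) → 𝕜}
    {T : (ι → 𝕜) →L[𝕜] 𝕜} {y : ι → 𝕜} (hG : HasStrictFDerivAt G T y) (j : ι) :
    HasStrictFDerivAt (fun x => update x j (G x)) (ContinuousLinearMap.replaceCoord j T) y := by
  refine hasStrictFDerivAt_pi'' fun i => ?_
  by_cases hi : i = j
  · subst hi
    convert hG using 1 <;> ext <;> simp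
  · convert hasStrictFDerivAt_apply i y using 1 <;> ext <;> simp [hi]

end ReplaceCoord

section Hyperplane

variable {𝕜 : Type*} [NontriviallyNormedField 𝕜] [CompleteSpace 𝕜]
  {ι : Type*} [Fintype ι] [DecidableEq ι]

theorem HasStrictFDerivAt.exists_local_rightInverse_update {G : (ι → 𝕜) → 𝕜}
    {G' : (ι → 𝕜) →L[𝕜] 𝕜} {j : ι} (hG : HasStrictFDerivAt G G' 0) (hG0 : G 0 = 0)
    (hj : G' (Pi.single j 1) ≠ 0) :
    ∃ Ψ : (ι → 𝕜) → ι → 𝕜, Tendsto Ψ (𝓝 0) (𝓝 0) ∧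
      ∀ᶠ v in 𝓝 0, update (Ψ v) j (G (Ψ v)) = v := by
  have hu := ContinuousLinearMap.isUnit_replaceCoord_iff.mpr hj
  have hΦ : HasStrictFDerivAt (fun x => update x j (G x))
      (ContinuousLinearEquiv.ofUnit hu.unit : (ι → 𝕜) →L[𝕜] ι → 𝕜) 0 :=
    hG.replaceCoord j
  have hΦ0 : update (0 : ι → 𝕜) j (G 0) = 0 := by simp [hG0]
  refine ⟨hΦ.localInverse _ _ 0, ?_, ?_⟩
  · simpa [hΦ0] using hΦ.localInverse_tendsto
  · simpa [hΦ0] using hΦ.eventually_right_inverse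

/-- Straighten `G` to a coordinate by the inverse function theorem; that coordinate must be the
`i`-th one, since otherwise the line through `0` in direction `i` would lift to zeros
of `G` off the hyperplane. -/
theorem HasStrictFDerivAt.eventually_coord_eq_zero_imp_eq_zero {G : (ι → 𝕜) → 𝕜}
    {G' : (ι → 𝕜) →L[𝕜] 𝕜} {i : ι} (hG : HasStrictFDerivAt G G' 0) (hG' : G' ≠ 0)
    (hG0 : G 0 = 0) (hsub : ∀ᶠ y in 𝓝 0, G y = 0 → y i = 0) :
    ∀ᶠ y in 𝓝 0, y i = 0 → G y = 0 := by
  obtain ⟨j, hj⟩ := G'.exists_apply_single_ne_zero hG'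
  obtain ⟨Ψ, hΨ, hΦΨ⟩ := hG.exists_local_rightInverse_update hG0 hj
  have hΨsub : ∀ᶠ v in 𝓝 0, update (Ψ v) j (G (Ψ v)) = v ∧ (G (Ψ v) = 0 → Ψ v i = 0) :=
    hΦΨ.and (hΨ.eventually hsub)
  obtain rfl : j = i := by
    by_contra hji
    have hline : Tendsto (fun t : 𝕜 => (Pi.single i t : ι → 𝕜)) (𝓝[≠] 0) (𝓝 0) := by
      simpa using ((continuous_single (A := fun _ : ι => 𝕜) i).tendsto 0).mono_left
        nhdsWithin_le_nhds
    obtain ⟨t, ⟨hv, himp⟩, ht⟩ := ((hline.eventually hΨsub).and self_mem_nhdsWithin).exists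
    have hGΨ : G (Ψ (Pi.single i t)) = 0 := by
      simpa [Pi.single_apply, hji] using congrFun hv j
    have hΨi : Ψ (Pi.single i t) i = t := by
      simpa [update_apply, Ne.symm hji] using congrFun hv i
    exact ht (hΨi ▸ himp hGΨ)
  filter_upwards [hΨsub] with y ⟨hy, himp⟩ hyi
  have hGΨ : G (Ψ y) = 0 := by simpa [hyi] using congrFun hy j
  have hΨy : Ψ y = y := by
    calc Ψ y = update (Ψ y) j (Ψ y j) := (update_eq_self j _).symm
      _ = y := by rw [himp hGΨ, ← hGΨ, hy]
  rwa [← hΨy]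

end Hyperplane

theorem HasStrictFDerivAt.eventuallyEq_id_of_comp_eventuallyEq {𝕜 : Type*}
    [NontriviallyNormedField 𝕜] {E F : Type*} [NormedAddCommGroup E] [NormedSpace 𝕜 E]
    [CompleteSpace E] [NormedAddCommGroup F] [NormedSpace 𝕜 F] [CompleteSpace F]
    {f : E → F} {f' : E ≃L[𝕜] F} {φ : E → E} {x : E}
    (hf : HasStrictFDerivAt f (f' : E →L[𝕜] F) x) (hφ : ContinuousAt φ x) (hφx : φ x = x)
    (hfφ : f ∘ φ =ᶠ[𝓝 x] f) : φ =ᶠ[𝓝 x] id := by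
  have hφ : Tendsto φ (𝓝 x) (𝓝 x) := by simpa only [hφx] using hφ.tendsto
  filter_upwards [hφ.eventually hf.eventually_left_inverse, hfφ, hf.eventually_left_inverse]
    with z hφz hfφz hz
  rw [comp_apply] at hfφz
  rw [hfφz, hz] at hφz
  exact hφz.symm

section FixedPoints

variable {E : Type*} [NormedAddCommGroup E] [NormedSpace ℂ E]
  {G : Type*} [NormedAddCommGroup G] [NormedSpace ℂ G] [CompleteSpace G]

theorem AnalyticAt.eventually_not_eventuallyEq_zero {F : E → G} {a : E}
    (hF : AnalyticAt ℂ F a) (h : ¬ F =ᶠ[𝓝 a] 0) : ∀ᶠ x in 𝓝 a, ¬ F =ᶠ[𝓝 x] 0 := by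
  obtain ⟨ε, hε, hball⟩ := Metric.eventually_nhds_iff_ball.mp hF.eventually_analyticAt
  have hF : AnalyticOnNhd ℂ F (Metric.ball a ε) := hball
  filter_upwards [Metric.ball_mem_nhds a hε] with x hx hx0
  exact h <| eventuallyEq_of_mem (Metric.ball_mem_nhds a hε) <|
    hF.eqOn_zero_of_preconnected_of_eventuallyEq_zero (convex_ball a ε).isPreconnected hx hx0

theorem eventually_not_isUnit_fderiv_of_apply_eq_self [CompleteSpace E] {f φ : E → E}
    {F : E → G} {a : E} (hf : ∀ᶠ x in 𝓝 a, AnalyticAt ℂ f x)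
    (hφ : ∀ᶠ x in 𝓝 a, ContinuousAt φ x) (hfφ : f ∘ φ =ᶠ[𝓝 a] f) (hF : AnalyticAt ℂ F a)
    (hF0 : ¬ F =ᶠ[𝓝 a] 0) (hfix : ∀ᶠ x in 𝓝 a, (φ x = x ↔ F x = 0)) :
    ∀ᶠ x in 𝓝 a, φ x = x → ¬ IsUnit (fderiv ℂ f x) := by
  filter_upwards [hf, hφ, hfφ.eventuallyEq_nhds, hfix.eventually_nhds,
    hF.eventually_not_eventuallyEq_zero hF0] with x hfx hφx hfφx hfixx hFx hx hu
  have hfx : HasStrictFDerivAt f (ContinuousLinearEquiv.ofUnit hu.unit : E →L[ℂ] E) x :=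
    hfx.hasStrictFDerivAt
  refine hFx ?_
  filter_upwards [hfx.eventuallyEq_id_of_comp_eventuallyEq hφx hx hfφx, hfixx] with z hz hfixz
  exact hfixz.mp hz

end FixedPoints

theorem isUnit_fderiv_iff_of_comp_eventuallyEq {𝕜 : Type*} [NontriviallyNormedField 𝕜]
    {E : Type*} [NormedAddCommGroup E] [NormedSpace 𝕜 E] {f g h l : E → E} {y : E}
    (hf : DifferentiableAt 𝕜 f (h y)) (hh : DifferentiableAt 𝕜 h y)
    (hl : DifferentiableAt 𝕜 l (g y)) (hg : DifferentiableAt 𝕜 g y)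
    (hh' : IsUnit (fderiv 𝕜 h y)) (hl' : IsUnit (fderiv 𝕜 l (g y)))
    (heq : f ∘ h =ᶠ[𝓝 y] l ∘ g) :
    IsUnit (fderiv 𝕜 f (h y)) ↔ IsUnit (fderiv 𝕜 g y) := by
  have hmul : fderiv 𝕜 f (h y) * fderiv 𝕜 h y = fderiv 𝕜 l (g y) * fderiv 𝕜 g y := by
    rw [ContinuousLinearMap.mul_def, ContinuousLinearMap.mul_def, ← fderiv_comp y hf hh,
      heq.fderiv_eq, fderiv_comp y hl hg]
  rw [← hh'.mul_right_iff, hmul, hl'.mul_left_iff]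

section Germs

variable {n : ℕ}

theorem IsBiholGerm.exists_hasStrictFDerivAt_comp_ne_zero {h : Cn n → Cn n} (hh : IsBiholGerm h)
    {F : Cn n → ℂ} (hF : AnalyticAt ℂ F 0) (hdF : fderiv ℂ F 0 ≠ 0) :
    ∃ G' : Cn n →L[ℂ] ℂ, HasStrictFDerivAt (F ∘ h) G' 0 ∧ G' ≠ 0 := by
  refine ⟨(fderiv ℂ F 0).comp (fderiv ℂ h 0), ?_, fun h0 => hdF ?_⟩
  · have hFh : AnalyticAt ℂ F (h 0) := by rwa [hh.1.1]
    have := hFh.hasStrictFDerivAt.comp 0 hh.1.2.self_of_nhds.hasStrictFDerivAt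
    rwa [hh.1.1] at this
  · simpa [ContinuousLinearMap.comp_assoc, ← ContinuousLinearMap.mul_def,
      ContinuousLinearMap.one_def] using congrArg (·.comp (↑hh.2.unit⁻¹ : Cn n →L[ℂ] Cn n)) h0

theorem IsHoloGerm.tendsto_nhds_zero {h : Cn n → Cn n} (hh : IsHoloGerm h) :
    Tendsto h (𝓝 0) (𝓝 0) := by
  simpa only [hh.1] using hh.2.self_of_nhds.continuousAt.tendsto

theorem IsBiholGerm.map_nhds_zero {h : Cn n → Cn n} (hh : IsBiholGerm h) :
    map h (𝓝 0) = 𝓝 0 := by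
  have hh' : HasStrictFDerivAt h (ContinuousLinearEquiv.ofUnit hh.2.unit : Cn n →L[ℂ] Cn n) 0 :=
    hh.1.2.self_of_nhds.hasStrictFDerivAt
  simpa only [hh.1.1] using hh'.map_nhds_eq_of_equiv

theorem IsBiholGerm.eventually_isUnit_fderiv {h : Cn n → Cn n} (hh : IsBiholGerm h) :
    ∀ᶠ y in 𝓝 0, IsUnit (fderiv ℂ h y) :=
  hh.1.2.self_of_nhds.fderiv.continuousAt.eventually_mem (Units.isOpen.mem_nhds hh.2)

theorem canonFold_eq_update [NeZero n] (k : ℕ) :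
    canonFold n k = fun x => update x 0 (x 0 ^ k) := by
  ext x i
  by_cases hi : i = 0
  · subst hi; simp [canonFold]
  · simp [canonFold, hi, Fin.val_eq_zero_iff]

theorem hasStrictFDerivAt_canonFold [NeZero n] (k : ℕ) (y : Cn n) :
    HasStrictFDerivAt (canonFold n k)
      (ContinuousLinearMap.replaceCoord 0 (((k : ℂ) * y 0 ^ (k - 1)) • .proj 0)) y := by
  rw [canonFold_eq_update]
  exact ((hasStrictDerivAt_pow k (y 0)).comp_hasStrictFDerivAt y
    (hasStrictFDerivAt_apply 0 y)).replaceCoord 0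

theorem isUnit_fderiv_canonFold_iff [NeZero n] {k : ℕ} (hk : 2 ≤ k) (y : Cn n) :
    IsUnit (fderiv ℂ (canonFold n k) y) ↔ y 0 ≠ 0 := by
  rw [(hasStrictFDerivAt_canonFold k y).hasFDerivAt.fderiv,
    ContinuousLinearMap.isUnit_replaceCoord_iff]
  simp [show k - 1 ≠ 0 by omega, show k ≠ 0 by omega]

theorem tendsto_canonFold_nhds_zero [NeZero n] {k : ℕ} (hk : k ≠ 0) :
    Tendsto (canonFold n k) (𝓝 0) (𝓝 0) := by
  rw [canonFold_eq_update]
  simpa [zero_pow hk] using ((continuous_id.update 0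
    ((continuous_apply 0).pow k)).tendsto (0 : Cn n))

theorem eventually_isUnit_fderiv_iff_of_comp_eq_canonFold [NeZero n] {k : ℕ} (hk : 2 ≤ k)
    {f h l : Cn n → Cn n} (hf : ∀ᶠ x in 𝓝 0, AnalyticAt ℂ f x) (hh : IsBiholGerm h)
    (hl : IsBiholGerm l) (heq : GermEq (f ∘ h) (l ∘ canonFold n k)) :
    ∀ᶠ y in 𝓝 0, (IsUnit (fderiv ℂ f (h y)) ↔ y 0 ≠ 0) := by
  have hfold := tendsto_canonFold_nhds_zero (n := n) (show k ≠ 0 by omega)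
  filter_upwards [hh.1.tendsto_nhds_zero.eventually hf, hh.1.2, hfold.eventually hl.1.2,
    hh.eventually_isUnit_fderiv, hfold.eventually hl.eventually_isUnit_fderiv,
    Filter.EventuallyEq.eventuallyEq_nhds heq] with y hfy hhy hly hh'y hl'y heqy
  rw [isUnit_fderiv_iff_of_comp_eventuallyEq hfy.differentiableAt hhy.differentiableAt
    hly.differentiableAt (hasStrictFDerivAt_canonFold k y).differentiableAt hh'y hl'y heqy,
    isUnit_fderiv_canonFold_iff hk]

end Germs

/-- Proposition 2.9: if a k-fold f is associated with a
reflection φ, then Σ(f) = Fix(φ) as germs of sets at 0. -/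
theorem stmt_3 (n k : ℕ) (hn : 2 ≤ n) (hk : 2 ≤ k)
    (f φ : Cn n → Cn n) (hf : IsKFold k f) (hφ : IsReflection φ)
    (hassoc : GermEq (f ∘ φ) f) :
    ∀ᶠ x in nhds (0 : Cn n), (¬ IsUnit (fderiv ℂ f x) ↔ φ x = x) := by
  have : NeZero n := ⟨by omega⟩
  obtain ⟨⟨-, hfan⟩, h, l, hh, hl, heq⟩ := hf
  obtain ⟨⟨⟨-, hφan⟩, -⟩, -, F, hF0, hFan, hdF, hfix⟩ := hφ
  have hF : ¬ F =ᶠ[𝓝 0] 0 := fun hF => hdF (by rw [hF.fderiv_eq, fderiv_zero, Pi.zero_apply])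
  have hfix_sing := eventually_not_isUnit_fderiv_of_apply_eq_self hfan
    (hφan.mono fun _ hx => hx.continuousAt) hassoc hFan hF hfix
  have hsing := eventually_isUnit_fderiv_iff_of_comp_eq_canonFold hk hfan hh hl heq
  have hfix_h := hh.1.tendsto_nhds_zero.eventually hfix
  have hfix_sing_h := hh.1.tendsto_nhds_zero.eventually hfix_sing
  obtain ⟨G', hG, hG'⟩ := hh.exists_hasStrictFDerivAt_comp_ne_zero hFan hdF
  have hzero : ∀ᶠ y in 𝓝 0, F (h y) = 0 → y 0 = 0 := by
    filter_upwards [hfix_h, hfix_sing_h, hsing] with y hfixy hsingy hy hGy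
    exact not_not.mp fun hy0 => hsingy (hfixy.mpr hGy) (hy.mpr hy0)
  have hhyper := hG.eventually_coord_eq_zero_imp_eq_zero hG' (by simp [hh.1.1, hF0]) hzero
  rw [← hh.map_nhds_zero, eventually_map]
  filter_upwards [hsing, hhyper, hfix_h, hfix_sing_h] with y hy hGy hfixy hsingy
  exact ⟨fun hnu => hfixy.mpr (hGy (not_not.mp (mt hy.mpr hnu))), hsingy⟩
end
end

section
/- Let φ be a holomorphic map on a neighborhood of 0 in ℂⁿ with φ(0) = 0 and φ^k = id as germs for some k ≥ 1, and let L = dφ(0) be its linear part. Then L^k = I, and the averaging map H = (1/k) Σ_{j=0}^{k−1} L^{−j} ∘ φ^j (where φ^j is the j-th iterate of φ) satisfies H ∘ φ = L ∘ H as germs and dH(0) = id; in particular H is a germ of biholomorphism on (ℂⁿ,0) conjugating φ to its linear part L. -/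
noncomputable section

open Filter Function

/-!
Differentiating φ^[k] = id at the fixed point gives L^k = 1. Precomposing the average with φ shifts
the index j to j + 1, which after applying L^{-1} is a cyclic rotation of the k summands because
L^{-k} = 1 and φ^[k] = id; hence H ∘ φ = L ∘ H. Each summand L^{-j} ∘ φ^[j] has derivative
L^{-j} L^j = 1 at 0, so dH(0) = 1.
-/

open Finset Topology

theorem Finset.sum_range_shift_of_eq {M : Type*} [AddCommMonoid M] {g : ℕ → M} {k : ℕ}
    (h : g k = g 0) : ∑ j ∈ range k, g (j + 1) = ∑ j ∈ range k, g j := by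
  cases k with
  | zero => rfl
  | succ m => rw [sum_range_succ, h, sum_range_succ' g]

section Averaging

variable {𝕜 E : Type*} [NontriviallyNormedField 𝕜] [NormedAddCommGroup E] [NormedSpace 𝕜 E]

theorem eventually_analyticAt_iterate {f : E → E} {x₀ : E} (hx₀ : f x₀ = x₀)
    (hf : ∀ᶠ x in 𝓝 x₀, AnalyticAt 𝕜 f x) (j : ℕ) : ∀ᶠ x in 𝓝 x₀, AnalyticAt 𝕜 f^[j] x := by
  induction j with
  | zero => exact .of_forall fun _ => analyticAt_id
  | succ j ih =>
    have hf' : ∀ᶠ x in 𝓝 x₀, AnalyticAt 𝕜 f (f^[j] x) := by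
      refine ih.self_of_nhds.continuousAt.eventually ?_
      rwa [iterate_fixed hx₀]
    filter_upwards [ih, hf'] with x hj hfj
    rw [iterate_succ']
    exact hfj.comp hj

theorem fderiv_pow_eq_one_of_iterate_eventuallyEq_id {f : E → E} {x₀ : E} {k : ℕ}
    (hx₀ : f x₀ = x₀) (hf : DifferentiableAt 𝕜 f x₀) (hk : f^[k] =ᶠ[𝓝 x₀] id) :
    fderiv 𝕜 f x₀ ^ k = 1 := by
  rw [← (hf.hasFDerivAt.iterate hx₀ k).fderiv, hk.fderiv_eq, fderiv_id]
  rfl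

def iterateAverage (M : E →L[𝕜] E) (f : E → E) (k : ℕ) (x : E) : E :=
  (k : 𝕜)⁻¹ • ∑ j ∈ range k, (M ^ j) (f^[j] x)

theorem iterateAverage_apply_self {M L : E →L[𝕜] E} {f : E → E} {k : ℕ} {x : E}
    (hLM : L * M = 1) (hMk : M ^ k = 1) (hx : f^[k] x = x) :
    iterateAverage M f k (f x) = L (iterateAverage M f k x) := by
  set g : ℕ → E := fun j => L ((M ^ j) (f^[j] x))
  have hshift : ∀ j, (M ^ j) (f^[j] (f x)) = g (j + 1) := fun j => by
    rw [← iterate_succ_apply]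
    change _ = (L * M ^ (j + 1)) _
    rw [pow_succ', ← mul_assoc, hLM, one_mul]
  have hperiod : g k = g 0 := by simp only [g, hx, hMk, pow_zero, iterate_zero, id_eq]
  simp only [iterateAverage, map_smul, map_sum, hshift, sum_range_shift_of_eq hperiod, g]

theorem hasFDerivAt_iterateAverage [CharZero 𝕜] {M L : E →L[𝕜] E} {f : E → E} {k : ℕ} {x₀ : E}
    (hf : HasFDerivAt f L x₀) (hx₀ : f x₀ = x₀) (hML : M * L = 1) (hk : k ≠ 0) :
    HasFDerivAt (iterateAverage M f k) (1 : E →L[𝕜] E) x₀ := by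
  have hsum : HasFDerivAt (fun x => ∑ j ∈ range k, (M ^ j) (f^[j] x))
      (∑ j ∈ range k, (M ^ j).comp (L ^ j)) x₀ :=
    HasFDerivAt.fun_sum fun j _ => (M ^ j).hasFDerivAt.comp x₀ (hf.iterate hx₀ j)
  have hterms : ∑ j ∈ range k, (M ^ j).comp (L ^ j) = (k : 𝕜) • (1 : E →L[𝕜] E) := by
    simp only [← ContinuousLinearMap.mul_def, pow_mul_pow_eq_one _ hML, sum_const, card_range,
      Nat.cast_smul_eq_nsmul]
  have hH := hsum.fun_const_smul (k : 𝕜)⁻¹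
  rwa [hterms, smul_smul, inv_mul_cancel₀ (Nat.cast_ne_zero.mpr hk), one_smul] at hH

theorem iterateAverage_zero {M : E →L[𝕜] E} {f : E → E} {k : ℕ} (hf : f 0 = 0) :
    iterateAverage M f k 0 = 0 := by
  simp [iterateAverage, iterate_fixed hf]

theorem eventually_analyticAt_iterateAverage {M : E →L[𝕜] E} {f : E → E} {k : ℕ} {x₀ : E}
    (hx₀ : f x₀ = x₀) (hf : ∀ᶠ x in 𝓝 x₀, AnalyticAt 𝕜 f x) :
    ∀ᶠ x in 𝓝 x₀, AnalyticAt 𝕜 (iterateAverage M f k) x := by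
  filter_upwards [(eventually_all_finset (range k)).mpr fun j _ =>
    eventually_analyticAt_iterate hx₀ hf j] with x hx
  exact analyticAt_const.fun_smul <|
    Finset.analyticAt_fun_sum _ fun j hj => ((M ^ j).analyticAt _).comp (hx j hj)

end Averaging

/-- averaging conjugacy: if φ^k = id as germs, then L = dφ(0)
satisfies L^k = I, and H = (1/k) Σ_{j<k} L^{−j} ∘ φ^j satisfies H ∘ φ = L ∘ H
as germs, dH(0) = id, and H is a germ of biholomorphism. -/
theorem stmt_4 (n k : ℕ) (hk : 1 ≤ k) (φ : Cn n → Cn n)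
    (hφ0 : φ 0 = 0) (hφa : ∀ᶠ x in nhds (0 : Cn n), AnalyticAt ℂ φ x)
    (hord : GermEq (φ^[k]) id) :
    (fderiv ℂ φ 0) ^ k = 1 ∧
    ∀ Linv : Cn n →L[ℂ] Cn n,
      Linv * fderiv ℂ φ 0 = 1 → fderiv ℂ φ 0 * Linv = 1 →
      ∀ H : Cn n → Cn n,
        H = (fun x => (k : ℂ)⁻¹ • ∑ j ∈ Finset.range k, (Linv ^ j) (φ^[j] x)) →
        GermEq (H ∘ φ) (fun x => fderiv ℂ φ 0 (H x)) ∧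
        fderiv ℂ H 0 = ContinuousLinearMap.id ℂ (Cn n) ∧
        IsBiholGerm H := by
  have hφd : DifferentiableAt ℂ φ 0 := hφa.self_of_nhds.differentiableAt
  have hLk := fderiv_pow_eq_one_of_iterate_eventuallyEq_id hφ0 hφd hord
  refine ⟨hLk, fun Linv hLinvL hLLinv H hH => ?_⟩
  obtain rfl : H = iterateAverage Linv φ k := hH
  have hLinvk : Linv ^ k = 1 :=
    calc Linv ^ k = Linv ^ k * fderiv ℂ φ 0 ^ k := by rw [hLk, mul_one]
      _ = 1 := pow_mul_pow_eq_one k hLinvL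
  have hdH : fderiv ℂ (iterateAverage Linv φ k) 0 = ContinuousLinearMap.id ℂ (Cn n) :=
    (hasFDerivAt_iterateAverage hφd.hasFDerivAt hφ0 hLinvL (by omega)).fderiv
  refine ⟨?_, hdH, ⟨iterateAverage_zero hφ0, eventually_analyticAt_iterateAverage hφ0 hφa⟩, ?_⟩
  · filter_upwards [hord] with x hx
    exact iterateAverage_apply_self hLLinv hLinvk hx
  · rw [hdH]
    exact isUnit_one
end
end

section
/- Let n, k ≥ 2 and let φ be a reflection on (ℂⁿ,0) of order k. Then there exists a k-fold f on (ℂⁿ,0) associated with φ, i.e. satisfying f ∘ φ = f as germs. -/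
noncomputable section

open Filter Function

/-!
With `A = dφ(0)`, Cartan's average `ψ = (1/k) ∑_{j<k} A⁻ʲ ∘ φʲ` is a germ of biholomorphism
with `ψ ∘ φ = A ∘ ψ`, and `Aᵏ = 1`. In particular `A ≠ 1`, for otherwise `φ` would be the
identity. Differentiating `φ` along its fixed hypersurface shows that the tangent hyperplane is
fixed by `A`, so the eigenspace of `A` for `1` is a hyperplane. Since `Xᵏ - 1` is squarefree,
`A` is semisimple, so this hyperplane has an `A`-invariant complement spanned by an eigenvector
with eigenvalue `μ`, `μᵏ = 1`. In a basis starting with that eigenvector `A` becomes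
`diag(μ, 1, …, 1)`, which the canonical fold absorbs: `f = f₁ ∘ L⁻¹ ∘ ψ` is a `k`-fold with
`f ∘ φ = f`.
-/
open Topology Module Polynomial

def scaleFirst {R : Type*} [Mul R] {n : ℕ} (μ : R) (x : Fin n → R) : Fin n → R :=
  fun i => if (i : ℕ) = 0 then μ * x i else x i

section LinearAlgebra

variable {K V : Type*} [Field K] [AddCommGroup V] [Module K V]

theorem Module.End.exists_eigenvector_notMem_eigenspace_one {A : End K V} {k : ℕ}
    (hk : (k : K) ≠ 0) (hAk : A ^ k = 1) (hU : IsCoatom (A.eigenspace 1)) :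
    ∃ (v : V) (μ : K), v ∉ A.eigenspace 1 ∧ A v = μ • v ∧ μ ^ k = 1 := by
  have hss : A.IsSemisimple :=
    isSemisimple_of_squarefree_aeval_eq_zero (separable_X_pow_sub_C 1 hk one_ne_zero).squarefree
      (by simp [hAk])
  obtain ⟨W, hWA, hUW⟩ := isSemisimple_iff.mp hss _ (eigenspace_mem_invtSubmodule A 1)
  obtain ⟨v, hvW, hv0⟩ := W.ne_bot_iff.mp fun hW => hU.1 (eq_top_of_isCompl_bot (hW ▸ hUW))
  have hvU : v ∉ A.eigenspace 1 := fun hvU => hv0 (Submodule.disjoint_def.mp hUW.1 v hvU hvW)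
  obtain ⟨u, hu, w, hw, huw⟩ := Submodule.mem_sup.mp
    ((Submodule.isCompl_span_singleton_of_isCoatom_of_notMem hU hvU).sup_eq_top ▸
      Submodule.mem_top (x := A v))
  obtain ⟨μ, rfl⟩ := Submodule.mem_span_singleton.mp hw
  -- `u = A v - μ • v` lies in both `W` and the fixed space
  have hu0 : u = 0 := by
    refine Submodule.disjoint_def.mp hUW.1 u hu ?_
    rw [eq_sub_of_add_eq huw]
    exact W.sub_mem ((Module.End.mem_invtSubmodule A).mp hWA hvW) (W.smul_mem μ hvW)
  have hAv : A v = μ • v := by rw [← huw, hu0, zero_add]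
  refine ⟨v, μ, hvU, hAv, smul_left_injective K hv0 ?_⟩
  have := (Module.End.HasEigenvector.pow_apply ⟨Module.End.mem_eigenspace_iff.mpr hAv, hv0⟩ k)
  simpa [hAk] using this.symm

theorem Module.End.exists_linearEquiv_conj_scaleFirst [FiniteDimensional K V] {n : ℕ}
    (hn : finrank K V = n) {A : End K V} {k : ℕ} (hk : (k : K) ≠ 0) (hAk : A ^ k = 1)
    (hU : IsCoatom (A.eigenspace 1)) :
    ∃ (L : (Fin n → K) ≃ₗ[K] V) (μ : K), μ ^ k = 1 ∧ ∀ c, A (L c) = L (scaleFirst μ c) := by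
  obtain ⟨v, μ, hvU, hAv, hμ⟩ := A.exists_eigenvector_notMem_eigenspace_one hk hAk hU
  have hv0 : v ≠ 0 := fun h => hvU (h ▸ Submodule.zero_mem _)
  have hUv := Submodule.isCompl_span_singleton_of_isCoatom_of_notMem hU hvU
  obtain ⟨q, rfl, hq⟩ : ∃ q, n = q + 1 ∧ finrank K (A.eigenspace 1) = q := by
    have := Submodule.finrank_add_eq_of_isCompl hUv
    rw [finrank_span_singleton hv0] at this
    exact ⟨_, by omega, rfl⟩
  have hli : ∀ (c : K), ∀ u ∈ A.eigenspace 1, c • v + u = 0 → c = 0 := by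
    intro c u hu hcu
    by_contra hc
    refine hvU ((Submodule.smul_mem_iff _ hc).mp ?_)
    rw [eq_neg_of_add_eq_zero_left hcu]
    exact Submodule.neg_mem _ hu
  have hsp : ∀ z : V, ∃ c : K, z + c • v ∈ A.eigenspace 1 := by
    intro z
    obtain ⟨u, hu, w, hw, rfl⟩ := Submodule.mem_sup.mp (hUv.sup_eq_top ▸ Submodule.mem_top (x := z))
    obtain ⟨c, rfl⟩ := Submodule.mem_span_singleton.mp hw
    exact ⟨-c, by simpa using hu⟩
  let b := Basis.mkFinCons v (finBasisOfFinrankEq K _ hq) hli hsp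
  refine ⟨b.equivFun.symm, μ, hμ, fun c => ?_⟩
  simp only [Basis.equivFun_symm_apply, map_sum, map_smul]
  refine Finset.sum_congr rfl fun i _ => ?_
  refine Fin.cases ?_ (fun i => ?_) i
  · simp [b, scaleFirst, hAv, smul_smul, mul_comm]
  · have : A (b i.succ) = b i.succ := by
      simpa [b] using Module.End.mem_eigenspace_iff.mp (finBasisOfFinrankEq K _ hq i).2
    simp [this, scaleFirst]

theorem Module.End.isCoatom_eigenspace_one_of_ker_le {A : End K V} {ℓ : Module.Dual K V}
    (hℓ : ℓ ≠ 0) (hA : A ≠ 1) (h : LinearMap.ker ℓ ≤ A.eigenspace 1) :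
    IsCoatom (A.eigenspace 1) := by
  have hker := LinearMap.isCoatom_ker_of_surjective (LinearMap.surjective_of_ne_zero hℓ)
  have hne : A.eigenspace 1 ≠ ⊤ := fun htop => hA <| LinearMap.ext fun x => by
    simpa using Module.End.mem_eigenspace_iff.mp (htop ▸ Submodule.mem_top : x ∈ A.eigenspace 1)
  exact (hker.le_iff_eq hne).mp h ▸ hker

section Linearization

variable {𝕜 E : Type*} [NontriviallyNormedField 𝕜] [NormedAddCommGroup E] [NormedSpace 𝕜 E]
  {φ : E → E} {A : E →L[𝕜] E} {k : ℕ}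

theorem AnalyticAt.iterate {x : E} (hφ : AnalyticAt 𝕜 φ x) (hx : φ x = x) (j : ℕ) :
    AnalyticAt 𝕜 φ^[j] x := by
  induction j with
  | zero => exact analyticAt_id
  | succ j ih => exact iterate_succ φ j ▸ (hx.symm ▸ ih : AnalyticAt 𝕜 φ^[j] (φ x)).comp hφ

theorem pow_fderiv_eq_one_of_iterate_eventuallyEq_id (hφ0 : φ 0 = 0)
    (hφ : DifferentiableAt 𝕜 φ 0) (hφk : φ^[k] =ᶠ[𝓝 0] id) : fderiv 𝕜 φ 0 ^ k = 1 := by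
  rw [← (hφ.hasFDerivAt.iterate hφ0 k).fderiv, hφk.fderiv_eq, fderiv_id]
  rfl

/-- Cartan's average `(1/k) ∑_{j<k} A⁻ʲ ∘ φʲ`, with `A ^ (k - 1)` standing for `A⁻¹`
(in all uses `A ^ k = 1`). -/
def cartanAverage (k : ℕ) (A : E →L[𝕜] E) (φ : E → E) (x : E) : E :=
  (k : 𝕜)⁻¹ • ∑ j ∈ Finset.range k, ((A ^ (k - 1)) ^ j) (φ^[j] x)

theorem cartanAverage_zero (hφ0 : φ 0 = 0) : cartanAverage k A φ 0 = 0 := by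
  simp only [cartanAverage, iterate_fixed hφ0, map_zero, Finset.sum_const_zero, smul_zero]

theorem analyticAt_cartanAverage (hφ0 : φ 0 = 0) (hφ : AnalyticAt 𝕜 φ 0) :
    AnalyticAt 𝕜 (cartanAverage k A φ) 0 := by
  refine analyticAt_const.smul (Finset.analyticAt_fun_sum _ fun j _ => ?_)
  exact ((A ^ (k - 1)) ^ j).analyticAt _ |>.comp (hφ.iterate hφ0 j)

theorem hasFDerivAt_cartanAverage (hk : (k : 𝕜) ≠ 0) (hφ0 : φ 0 = 0) (hφ : HasFDerivAt φ A 0)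
    (hAk : A ^ k = 1) : HasFDerivAt (cartanAverage k A φ) (1 : E →L[𝕜] E) 0 := by
  have hCA : A ^ (k - 1) * A = 1 := (pow_sub_one_mul (by rintro rfl; simp at hk) A).trans hAk
  have hterm (j : ℕ) :
      HasFDerivAt (fun x => ((A ^ (k - 1)) ^ j) (φ^[j] x)) (1 : E →L[𝕜] E) 0 := by
    have hj : (A ^ (k - 1)) ^ j * A ^ j = 1 := by
      rw [← ((Commute.refl A).pow_left (k - 1)).mul_pow, hCA, one_pow]
    exact hj ▸ ((A ^ (k - 1)) ^ j).hasFDerivAt.comp 0 (hφ.iterate hφ0 j)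
  have := (HasFDerivAt.fun_sum fun j (_ : j ∈ Finset.range k) => hterm j).const_smul (k : 𝕜)⁻¹
  rwa [Finset.sum_const, Finset.card_range, ← Nat.cast_smul_eq_nsmul 𝕜, smul_smul,
    inv_mul_cancel₀ hk, one_smul] at this

theorem cartanAverage_comp_eventuallyEq (hφk : φ^[k] =ᶠ[𝓝 0] id) (hAk : A ^ k = 1) :
    cartanAverage k A φ ∘ φ =ᶠ[𝓝 0] A ∘ cartanAverage k A φ := by
  obtain rfl | hk := eq_or_ne k 0
  · exact Eventually.of_forall fun x => by simp [cartanAverage]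
  set C := A ^ (k - 1)
  have hAC : A * C = 1 := (mul_pow_sub_one hk A).trans hAk
  have hCk : C ^ k = 1 := by rw [← pow_mul, mul_comm, pow_mul, hAk, one_pow]
  filter_upwards [hφk] with x hx
  -- the terms `g j = A (C ^ j (φ^[j] x))` are `k`-periodic in `j`
  set g : ℕ → E := fun j => A ((C ^ j) (φ^[j] x))
  have hshift : ∑ j ∈ Finset.range k, g (j + 1) = ∑ j ∈ Finset.range k, g j := by
    obtain ⟨k, rfl⟩ := Nat.exists_eq_succ_of_ne_zero hk
    have hg : g (k + 1) = g 0 := by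
      simp only [g, hx, hCk, id, pow_zero, iterate_zero, one_apply_eq_self]
    rw [Finset.sum_range_succ, hg, ← Finset.sum_range_succ']
  have hg (j : ℕ) : g (j + 1) = (C ^ j) (φ^[j] (φ x)) := by
    have : A * C ^ (j + 1) = C ^ j := by rw [pow_succ', ← mul_assoc, hAC, one_mul]
    simp only [g, iterate_succ_apply, ← this]
    rfl
  simp only [comp_apply, cartanAverage, map_smul, map_sum, ← hg, hshift, C, g]

end Linearization

section FixedPoints

variable {𝕜 E : Type*} [NontriviallyNormedField 𝕜] [NormedAddCommGroup E] [NormedSpace 𝕜 E]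
  [CompleteSpace E] {φ : E → E}

theorem HasStrictFDerivAt.eventuallyEq_id_of_comp_eventuallyEq_s5 {ψ : E → E} {e : E ≃L[𝕜] E}
    (hψ : HasStrictFDerivAt ψ (e : E →L[𝕜] E) 0) (hφ0 : φ 0 = 0) (hφ : ContinuousAt φ 0)
    (h : ψ ∘ φ =ᶠ[𝓝 0] ψ) : φ =ᶠ[𝓝 0] id := by
  have hleft := hψ.eventually_left_inverse
  have hφt : Tendsto φ (𝓝 0) (𝓝 0) := by simpa only [hφ0] using hφ.tendsto
  filter_upwards [hleft, hφt.eventually hleft, h] with x hx hφx hψx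
  exact hφx.symm.trans ((congrArg _ hψx).trans hx)

theorem HasStrictFDerivAt.ker_le_eigenspace_one [CompleteSpace 𝕜] {F : E → 𝕜}
    {F' : E →L[𝕜] 𝕜} {A : E →L[𝕜] E} (hF : HasStrictFDerivAt F F' 0) (hF' : F' ≠ 0)
    (hF0 : F 0 = 0) (hφ : HasFDerivAt φ A 0) (hfix : ∀ᶠ x in 𝓝 0, F x = 0 → φ x = x) :
    LinearMap.ker (F' : E →ₗ[𝕜] 𝕜) ≤ Module.End.eigenspace (A : E →ₗ[𝕜] E) 1 := by
  intro w hw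
  rw [Module.End.mem_eigenspace_iff, one_smul]
  have hsurj : (F' : E →ₗ[𝕜] 𝕜).range = ⊤ :=
    Module.Dual.range_eq_top_of_ne_zero (ContinuousLinearMap.coe_injective.ne hF')
  -- the implicit function theorem parametrises `{F = 0}` near `0` by a map `g` on `ker F'`
  -- whose derivative at `0` is the inclusion
  have hg := hF.to_implicitFunction hsurj
  have hg0 := hF.implicitFunction_apply_image hsurj
  have hFg := ((tendsto_const_nhds (x := F 0)).prodMk_nhds tendsto_id).eventually
    (hF.map_implicitFunction_eq hsurj)
  simp only [id] at hFg
  generalize hF.implicitFunction F F' hsurj (F 0) = g at hg hg0 hFg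
  have hgt : Tendsto g (𝓝 0) (𝓝 0) := by simpa only [hg0] using hg.continuousAt.tendsto
  have hφg : φ ∘ g =ᶠ[𝓝 0] g := by
    filter_upwards [hFg, hgt.eventually hfix] with y hy hfy using hfy (hy.trans hF0)
  have hcomp := ((hg0 ▸ hφ : HasFDerivAt φ A (g 0)).comp 0 hg.hasFDerivAt).unique
    (hg.hasFDerivAt.congr_of_eventuallyEq hφg)
  exact congrArg (fun T => T ⟨w, hw⟩) hcomp

theorem eventuallyEq_id_of_fderiv_eq_one {k : ℕ} (hk : (k : 𝕜) ≠ 0) (hφ0 : φ 0 = 0)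
    (hφ : AnalyticAt 𝕜 φ 0) (hφk : φ^[k] =ᶠ[𝓝 0] id) (hA : fderiv 𝕜 φ 0 = 1) : φ =ᶠ[𝓝 0] id := by
  have hAk := pow_fderiv_eq_one_of_iterate_eventuallyEq_id hφ0 hφ.differentiableAt hφk
  have hψ := (analyticAt_cartanAverage (A := fderiv 𝕜 φ 0) (k := k) hφ0 hφ).hasStrictFDerivAt
  rw [(hasFDerivAt_cartanAverage hk hφ0 hφ.differentiableAt.hasFDerivAt hAk).fderiv,
    ContinuousLinearMap.one_def, ← ContinuousLinearEquiv.coe_refl] at hψ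
  refine hψ.eventuallyEq_id_of_comp_eventuallyEq_s5 hφ0 hφ.continuousAt ?_
  simpa [hA] using cartanAverage_comp_eventuallyEq hφk hAk

end FixedPoints

section Germs

variable {n : ℕ}

theorem ContinuousLinearEquiv.isBiholGerm (L : Cn n ≃L[ℂ] Cn n) : IsBiholGerm L :=
  ⟨⟨map_zero L, Eventually.of_forall fun x => (L : Cn n →L[ℂ] Cn n).analyticAt x⟩,
    L.fderiv ▸ ⟨L.toUnit, rfl⟩⟩

theorem isBiholGerm_cartanAverage {k : ℕ} (hk : (k : ℂ) ≠ 0) {φ : Cn n → Cn n} (hφ0 : φ 0 = 0)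
    (hφ : AnalyticAt ℂ φ 0) (hφk : φ^[k] =ᶠ[𝓝 0] id) :
    IsBiholGerm (cartanAverage k (fderiv ℂ φ 0) φ) :=
  ⟨⟨cartanAverage_zero hφ0, (analyticAt_cartanAverage hφ0 hφ).eventually_analyticAt⟩,
    (hasFDerivAt_cartanAverage hk hφ0 hφ.differentiableAt.hasFDerivAt
      (pow_fderiv_eq_one_of_iterate_eventuallyEq_id hφ0 hφ.differentiableAt hφk)).fderiv ▸
      isUnit_one⟩

theorem IsBiholGerm.comp {g f : Cn n → Cn n} (hg : IsBiholGerm g) (hf : IsBiholGerm f) :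
    IsBiholGerm (g ∘ f) := by
  obtain ⟨⟨hg0, hga⟩, hgu⟩ := hg
  obtain ⟨⟨hf0, hfa⟩, hfu⟩ := hf
  have hft : Tendsto f (𝓝 0) (𝓝 0) := by
    simpa only [hf0] using hfa.self_of_nhds.continuousAt.tendsto
  refine ⟨⟨by rw [comp_apply, hf0, hg0], ?_⟩, ?_⟩
  · filter_upwards [hfa, hft.eventually hga] with x hfx hgx using hgx.comp hfx
  · have hgd : DifferentiableAt ℂ g (f 0) := by rw [hf0]; exact hga.self_of_nhds.differentiableAt
    rw [fderiv_comp 0 hgd hfa.self_of_nhds.differentiableAt, hf0]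
    exact hgu.mul hfu

theorem IsBiholGerm.exists_rightInverse {g : Cn n → Cn n} (hg : IsBiholGerm g) :
    ∃ h : Cn n → Cn n, IsBiholGerm h ∧ ∀ᶠ z in 𝓝 0, g (h z) = z := by
  obtain ⟨⟨hg0, hga⟩, hgu⟩ := hg
  set e := ContinuousLinearEquiv.ofUnit hgu.unit
  have hge : fderiv ℂ g 0 = e := rfl
  have hs : HasStrictFDerivAt g (e : Cn n →L[ℂ] Cn n) 0 := hge ▸ hga.self_of_nhds.hasStrictFDerivAt
  have hana := (hs.toOpenPartialHomeomorph g).analyticAt_symm' hs.mem_toOpenPartialHomeomorph_source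
    hga.self_of_nhds hge
  rw [hs.toOpenPartialHomeomorph_coe, hg0] at hana
  refine ⟨hs.localInverse g e 0, ⟨⟨?_, hana.eventually_analyticAt⟩, ?_⟩,
    by simpa only [hg0] using hs.eventually_right_inverse⟩
  · simpa only [hg0] using hs.localInverse_apply_image
  · have hinv := hs.to_localInverse
    rw [hg0] at hinv
    rw [hinv.hasFDerivAt.fderiv]
    exact ⟨e.symm.toUnit, rfl⟩

theorem canonFold_zero {k : ℕ} (hk : k ≠ 0) : canonFold n k 0 = 0 := by
  funext i
  simp [canonFold, hk]

theorem analyticAt_canonFold (k : ℕ) (x : Cn n) : AnalyticAt ℂ (canonFold n k) x := by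
  refine analyticAt_pi_iff.mpr fun i => ?_
  have hproj : AnalyticAt ℂ (fun y : Cn n => y i) x := analyticAt_pi_iff.mp analyticAt_id i
  simp only [canonFold]
  split_ifs
  exacts [hproj.pow k, hproj]

theorem canonFold_scaleFirst {k : ℕ} {μ : ℂ} (hμ : μ ^ k = 1) (x : Cn n) :
    canonFold n k (scaleFirst μ x) = canonFold n k x := by
  funext i
  by_cases hi : (i : ℕ) = 0 <;> simp [canonFold, scaleFirst, hi, mul_pow, hμ]

theorem IsBiholGerm.isKFold_canonFold_comp {k : ℕ} (hk : k ≠ 0) {Φ : Cn n → Cn n}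
    (hΦ : IsBiholGerm Φ) : IsKFold k (canonFold n k ∘ Φ) := by
  obtain ⟨h, hh, hΦh⟩ := hΦ.exists_rightInverse
  refine ⟨⟨?_, ?_⟩, h, id, hh, (ContinuousLinearEquiv.refl ℂ (Cn n)).isBiholGerm, ?_⟩
  · rw [comp_apply, hΦ.1.1, canonFold_zero hk]
  · filter_upwards [hΦ.1.2] with x hx using (analyticAt_canonFold k _).comp hx
  · filter_upwards [hΦh] with z hz
    simp only [comp_apply, hz, id]

end Germs

theorem stmt_5_general (n k : ℕ) (hk : 2 ≤ k)
    (φ : Cn n → Cn n) (hφ : IsReflectionOfOrder φ k) :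
    ∃ f : Cn n → Cn n, IsKFold k f ∧ GermEq (f ∘ φ) f := by
  obtain ⟨⟨⟨hφ0, hφan⟩, -⟩, ⟨hφk, hφmin⟩, F, hF0, hFan, hF', hfix⟩ := hφ
  have hφa : AnalyticAt ℂ φ 0 := hφan.self_of_nhds
  have hk0 : (k : ℂ) ≠ 0 := Nat.cast_ne_zero.mpr (by omega)
  set A := fderiv ℂ φ 0
  have hAk : A ^ k = 1 := pow_fderiv_eq_one_of_iterate_eventuallyEq_id hφ0 hφa.differentiableAt hφk
  have hA1 : A ≠ 1 := fun hA =>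
    hφmin 1 one_pos hk (eventuallyEq_id_of_fderiv_eq_one hk0 hφ0 hφa hφk hA)
  have hU := Module.End.isCoatom_eigenspace_one_of_ker_le
    (ContinuousLinearMap.coe_injective.ne hF') (fun h => hA1 (ContinuousLinearMap.coe_injective h))
    (hFan.hasStrictFDerivAt.ker_le_eigenspace_one hF' hF0 hφa.differentiableAt.hasFDerivAt
      (hfix.mono fun x hx => hx.mpr))
  obtain ⟨L, μ, hμ, hAL⟩ := Module.End.exists_linearEquiv_conj_scaleFirst (Module.finrank_fin_fun ℂ)
    hk0 (by rw [← ContinuousLinearMap.toLinearMap_pow, hAk]; rfl) hU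
  set ψ := cartanAverage k A φ
  have hψ : IsBiholGerm ψ := isBiholGerm_cartanAverage hk0 hφ0 hφa hφk
  refine ⟨canonFold n k ∘ (L.toContinuousLinearEquiv.symm ∘ ψ),
    (L.toContinuousLinearEquiv.symm.isBiholGerm.comp hψ).isKFold_canonFold_comp (by omega), ?_⟩
  filter_upwards [cartanAverage_comp_eventuallyEq hφk hAk] with x hx
  have hlin : L.symm (A (ψ x)) = scaleFirst μ (L.symm (ψ x)) := by
    rw [LinearEquiv.symm_apply_eq, ← hAL, L.apply_symm_apply]
    rfl
  simp only [comp_apply, LinearEquiv.coe_toContinuousLinearEquiv_symm']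
  rw [show ψ (φ x) = A (ψ x) from hx, hlin, canonFold_scaleFirst hμ]

/-- Proposition 2.10: for any reflection φ of order k there is a
k-fold associated with φ. -/
theorem stmt_5 (n k : ℕ) (hn : 2 ≤ n) (hk : 2 ≤ k)
    (φ : Cn n → Cn n) (hφ : IsReflectionOfOrder φ k) :
    ∃ f : Cn n → Cn n, IsKFold k f ∧ GermEq (f ∘ φ) f :=
  stmt_5_general n k hk φ hφ
end LinearAlgebra
end
end

section
/- Let n, k ≥ 2, let i ∈ {1, …, n}, and let fᵢ(x₁,…,xₙ) = (x₁, …, xᵢ^k, …, xₙ) (the k-th power in the i-th coordinate). If l : (ℂⁿ,0) → (ℂⁿ,0) is a holomorphic germ with l(0) = 0 such that the composition g = l ∘ fᵢ is a k-fold, then dl(0) is invertible, i.e. l is a germ of biholomorphism. -/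
noncomputable section

open Filter Function

/-! Write the k-fold condition as `(l ∘ fᵢ) ∘ h = l' ∘ f₁` near 0 and take Jacobian
determinants: `det dl(fᵢ(h x)) · k hᵢ(x)^(k-1) · det dh(x) = det dl'(f₁ x) · k x₁^(k-1)`.
On the `x₁`-axis `x = t e₁` the right side is `k det dl'(0) t^(k-1) + o(t^(k-1))` with
`det dl'(0) ≠ 0`, while `hᵢ(t e₁) = O(t)`; so if `det dl(0) = 0` the left side would be
`o(t^(k-1))`. -/

open Topology

section

variable {𝕜 E : Type*} [NontriviallyNormedField 𝕜] [NormedAddCommGroup E] [NormedSpace 𝕜 E]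

theorem ContinuousLinearMap.isUnit_iff_isUnit_det [CompleteSpace 𝕜] [FiniteDimensional 𝕜 E]
    (L : E →L[𝕜] E) : IsUnit L ↔ IsUnit L.det := by
  refine ⟨fun hL => LinearMap.isUnit_det _ (hL.map toLinearMapRingHom), fun hL => ?_⟩
  let e : E ≃L[𝕜] E := (LinearMap.equivOfIsUnitDet hL).toContinuousLinearEquiv
  exact ⟨(ContinuousLinearEquiv.unitsEquiv 𝕜 E).symm e, by
    ext x; exact LinearMap.equivOfIsUnitDet_apply hL x⟩

theorem det_fderiv_comp {f g : E → E} {x : E} (hf : DifferentiableAt 𝕜 f (g x))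
    (hg : DifferentiableAt 𝕜 g x) :
    (fderiv 𝕜 (f ∘ g) x).det = (fderiv 𝕜 f (g x)).det * (fderiv 𝕜 g x).det := by
  rw [fderiv_comp x hf hg]
  exact LinearMap.det_comp _ _

theorem AnalyticAt.continuousAt_det_fderiv [CompleteSpace 𝕜] [FiniteDimensional 𝕜 E]
    {f : E → E} {x : E} (hf : AnalyticAt 𝕜 f x) :
    ContinuousAt (fun y => (fderiv 𝕜 f y).det) x :=
  haveI := FiniteDimensional.complete 𝕜 E
  ContinuousLinearMap.continuous_det.continuousAt.comp hf.fderiv.continuousAt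

theorem det_fderiv_piMap {ι : Type*} [Fintype ι] {φ : ι → 𝕜 → 𝕜} {y : ι → 𝕜}
    (hφ : ∀ j, DifferentiableAt 𝕜 (φ j) (y j)) :
    (fderiv 𝕜 (Pi.map φ) y).det = ∏ j, deriv (φ j) (y j) := by
  have hD : HasFDerivAt (Pi.map φ) (ContinuousLinearMap.pi fun j =>
      (ContinuousLinearMap.smulRight (1 : 𝕜 →L[𝕜] 𝕜) (deriv (φ j) (y j))).comp
        (ContinuousLinearMap.proj j)) y :=
    hasFDerivAt_pi.2 fun j => (hφ j).hasDerivAt.hasFDerivAt.comp y (hasFDerivAt_apply j y)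
  simp [hD.fderiv, ContinuousLinearMap.det_pi]

theorem eq_zero_of_eventually_mul_pow_eq {A B p : 𝕜 → 𝕜} {b : 𝕜} (m : ℕ)
    (hA : Tendsto A (𝓝 0) (𝓝 0)) (hp : DifferentiableAt 𝕜 p 0) (hp0 : p 0 = 0)
    (hB : Tendsto B (𝓝 0) (𝓝 b))
    (h : ∀ᶠ t in 𝓝 0, A t * p t ^ m = B t * t ^ m) : b = 0 := by
  have hslope : Tendsto (fun t => t⁻¹ * p t) (𝓝[≠] 0) (𝓝 (deriv p 0)) := by
    simpa [hp0] using hp.hasDerivAt.tendsto_slope_zero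
  have hlim : Tendsto (fun t => A t * (t⁻¹ * p t) ^ m) (𝓝[≠] 0) (𝓝 0) := by
    simpa using (hA.mono_left nhdsWithin_le_nhds).mul (hslope.pow m)
  refine tendsto_nhds_unique (hB.mono_left nhdsWithin_le_nhds) (hlim.congr' ?_)
  filter_upwards [nhdsWithin_le_nhds h, self_mem_nhdsWithin] with t ht ht0
  rw [mul_pow, mul_left_comm, ht, inv_pow, mul_comm (B t), ← mul_assoc,
    inv_mul_cancel₀ (pow_ne_zero _ ht0), one_mul]

end

section Fold

variable {n k : ℕ} {i : Fin n}

theorem foldAt_eq_piMap : foldAt n k i = Pi.map fun j => if j = i then (· ^ k) else id := by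
  funext x j
  by_cases hj : j = i <;> simp [foldAt, Pi.map, hj]

theorem differentiable_foldAt : Differentiable ℂ (foldAt n k i) := by
  refine differentiable_pi.2 fun j => ?_
  by_cases hj : j = i <;> simp only [foldAt, hj, if_true, if_false] <;> fun_prop

theorem tendsto_foldAt_zero (hk : k ≠ 0) : Tendsto (foldAt n k i) (𝓝 0) (𝓝 0) := by
  have h0 : foldAt n k i 0 = 0 := by
    funext j
    simp [foldAt, hk]
  simpa [h0] using (differentiable_foldAt (k := k) (i := i)).continuous.tendsto (0 : Cn n)

theorem det_fderiv_foldAt (y : Cn n) :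
    (fderiv ℂ (foldAt n k i) y).det = k * y i ^ (k - 1) := by
  rw [foldAt_eq_piMap, det_fderiv_piMap fun j => by split_ifs <;> fun_prop]
  rw [Finset.prod_eq_single i (fun j _ hj => by simp [hj]) (by simp)]
  simp

theorem det_fderiv_comp_foldAt {l : Cn n → Cn n} {y : Cn n}
    (hl : DifferentiableAt ℂ l (foldAt n k i y)) :
    (fderiv ℂ (l ∘ foldAt n k i) y).det =
      (fderiv ℂ l (foldAt n k i y)).det * (k * y i ^ (k - 1)) := by
  rw [det_fderiv_comp hl differentiable_foldAt.differentiableAt, det_fderiv_foldAt]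

theorem canonFold_eq_foldAt (hn : 0 < n) : canonFold n k = foldAt n k ⟨0, hn⟩ := by
  funext x j
  simp [canonFold, foldAt, Fin.ext_iff]

end Fold

theorem eventually_det_fderiv_comp_foldAt_eq {n k : ℕ} {i j : Fin n} {h l l' : Cn n → Cn n}
    {a : Cn n} (hh : ∀ᶠ x in 𝓝 a, DifferentiableAt ℂ h x)
    (hl : ∀ᶠ x in 𝓝 a, DifferentiableAt ℂ l (foldAt n k i (h x)))
    (hl' : ∀ᶠ x in 𝓝 a, DifferentiableAt ℂ l' (foldAt n k j x))
    (heq : (l ∘ foldAt n k i) ∘ h =ᶠ[𝓝 a] l' ∘ foldAt n k j) :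
    ∀ᶠ x in 𝓝 a, (fderiv ℂ l (foldAt n k i (h x))).det * (k * h x i ^ (k - 1)) *
        (fderiv ℂ h x).det = (fderiv ℂ l' (foldAt n k j x)).det * (k * x j ^ (k - 1)) := by
  filter_upwards [hh, hl, hl', heq.fderiv (𝕜 := ℂ)] with x hhx hlx hl'x hx
  rw [← det_fderiv_comp_foldAt hlx, ← det_fderiv_comp_foldAt hl'x,
    ← det_fderiv_comp (hlx.comp _ differentiable_foldAt.differentiableAt) hhx, hx]

theorem det_fderiv_eq_zero_of_eventually_det_fderiv_eq {n k : ℕ} {i j : Fin n}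
    {h l l' : Cn n → Cn n} (hk : k ≠ 0) (hh0 : h 0 = 0) (hh : AnalyticAt ℂ h 0)
    (hl : AnalyticAt ℂ l 0) (hl' : AnalyticAt ℂ l' 0)
    (hJ : ∀ᶠ x in 𝓝 0, (fderiv ℂ l (foldAt n k i (h x))).det * (k * h x i ^ (k - 1)) *
        (fderiv ℂ h x).det = (fderiv ℂ l' (foldAt n k j x)).det * (k * x j ^ (k - 1)))
    (hdet : (fderiv ℂ l 0).det = 0) : (fderiv ℂ l' 0).det = 0 := by
  set σ : ℂ → Cn n := fun t => Pi.single j t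
  have hσ : Tendsto σ (𝓝 0) (𝓝 0) := by
    simpa [σ] using (continuous_single (A := fun _ : Fin n => ℂ) j).tendsto 0
  have hhσ : Tendsto (h ∘ σ) (𝓝 0) (𝓝 0) := by
    simpa [hh0] using hh.continuousAt.tendsto.comp hσ
  have hA : Tendsto (fun t => (fderiv ℂ l (foldAt n k i (h (σ t)))).det * k *
      (fderiv ℂ h (σ t)).det) (𝓝 0) (𝓝 0) := by
    simpa [hdet] using ((hl.continuousAt_det_fderiv.tendsto.comp
      ((tendsto_foldAt_zero hk).comp hhσ)).mul_const (k : ℂ)).mul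
      (hh.continuousAt_det_fderiv.tendsto.comp hσ)
  have hp : DifferentiableAt ℂ (fun t => h (σ t) i) 0 := by
    have hhσ0 : DifferentiableAt ℂ h (σ 0) := by simpa [σ] using hh.differentiableAt
    exact (differentiableAt_apply i _).comp 0 (hhσ0.comp 0
      (hasFDerivAt_single (𝕜 := ℂ) (E := fun _ : Fin n => ℂ) (i := j) 0).differentiableAt)
  have hB : Tendsto (fun t => (fderiv ℂ l' (foldAt n k j (σ t))).det * k) (𝓝 0)
      (𝓝 ((fderiv ℂ l' 0).det * k)) :=
    (hl'.continuousAt_det_fderiv.tendsto.comp ((tendsto_foldAt_zero hk).comp hσ)).mul_const _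
  have hAB : ∀ᶠ t in 𝓝 0, (fderiv ℂ l (foldAt n k i (h (σ t)))).det * k *
      (fderiv ℂ h (σ t)).det * h (σ t) i ^ (k - 1) =
      (fderiv ℂ l' (foldAt n k j (σ t))).det * k * t ^ (k - 1) := by
    filter_upwards [hσ.eventually hJ] with t ht
    simp only [σ, Pi.single_eq_same] at ht
    linear_combination ht
  exact (mul_eq_zero.1 (eq_zero_of_eventually_mul_pow_eq (k - 1) hA hp (by simp [σ, hh0]) hB
    hAB)).resolve_right (Nat.cast_ne_zero.2 hk)

theorem stmt_7_general (n k : ℕ) (hk : 2 ≤ k) (i : Fin n)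
    (l : Cn n → Cn n) (hl : IsHoloGerm l)
    (hg : IsKFold k (l ∘ foldAt n k i)) :
    IsUnit (fderiv ℂ l 0) := by
  obtain ⟨-, h, l', ⟨⟨hh0, hh⟩, -⟩, ⟨⟨-, hl'⟩, hl'u⟩, heq⟩ := hg
  have hk0 : k ≠ 0 := by omega
  rw [GermEq, canonFold_eq_foldAt i.pos] at heq
  have hh0' : Tendsto h (𝓝 0) (𝓝 0) := by
    simpa [hh0] using hh.self_of_nhds.continuousAt.tendsto
  have hJ := eventually_det_fderiv_comp_foldAt_eq (hh.mono fun _ hx => hx.differentiableAt)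
    (((tendsto_foldAt_zero hk0).comp hh0').eventually (hl.2.mono fun _ hx => hx.differentiableAt))
    ((tendsto_foldAt_zero hk0).eventually (hl'.mono fun _ hx => hx.differentiableAt)) heq
  rw [ContinuousLinearMap.isUnit_iff_isUnit_det, isUnit_iff_ne_zero]
  intro hdet
  exact ((ContinuousLinearMap.isUnit_iff_isUnit_det _).1 hl'u).ne_zero
    (det_fderiv_eq_zero_of_eventually_det_fderiv_eq hk0 hh0 hh.self_of_nhds hl.2.self_of_nhds
      hl'.self_of_nhds hJ hdet)

/-- Lemma 3.1: if l is a holomorphic germ such that l ∘ fᵢ is a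
k-fold, then l is a germ of biholomorphism. -/
theorem stmt_7 (n k : ℕ) (hn : 2 ≤ n) (hk : 2 ≤ k) (i : Fin n)
    (l : Cn n → Cn n) (hl : IsHoloGerm l)
    (hg : IsKFold k (l ∘ foldAt n k i)) :
    IsUnit (fderiv ℂ l 0) :=
  stmt_7_general n k hk i l hl hg
end
end

section
/- Let n ≥ 2, s ≤ n, and for i = 1, …, s let kᵢ ≥ 2 and λᵢ be a primitive kᵢ-th root of unity. Given complex numbers a_{ij} and b_{ij} (1 ≤ i ≤ s, 1 ≤ j ≤ n, j ≠ i), define the linear reflections β_{i,a}(x) = (x₁ + a_{i1}xᵢ, …, λᵢxᵢ, …, xₙ + a_{in}xᵢ) and β_{i,b}(x) = (x₁ + b_{i1}xᵢ, …, λᵢxᵢ, …, xₙ + b_{in}xᵢ) (i-th coordinate λᵢxᵢ, j-th coordinate xⱼ plus the parameter times xᵢ). Then the s-tuples (β_{1,a},…,β_{s,a}) and (β_{1,b},…,β_{s,b}) are equivalent (i.e. there is a single invertible n×n complex matrix C with β_{i,b} C = C β_{i,a} for all i) if and only if there exists an invertible n×n complex matrix C whose entries satisfy: C_{ij} = 0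 for 1 ≤ i ≤ s and j ≠ i; writing ξᵢ = C_{ii} for 1 ≤ i ≤ s and c_{jk} = C_{jk} for s+1 ≤ j ≤ n, one has ξ₁ = 1, and (1) b_{ij} = (ξⱼ/ξᵢ) a_{ij} for all 1 ≤ i, j ≤ s with j ≠ i; (2) b_{1j} = (λ₁ − 1)c_{j1} + Σ_{k=2}^{n} a_{1k} c_{jk} for s+1 ≤ j ≤ n; (3) b_{ij} = (1/ξᵢ)((λᵢ − 1)c_{ji} + Σ_{k=1, k≠i}^{n} a_{ik} c_{jk}) for 2 ≤ i ≤ s and s+1 ≤ j ≤ n. -/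
noncomputable section

open Filter Function

/-- Endomorphisms of ℂⁿ. -/
abbrev EndC (n : ℕ) := Module.End ℂ (Cn n)

/-- The fixed subspace Fix(α) = ker(α − 1) of a linear map. -/
def FixL {n : ℕ} (α : EndC n) : Submodule ℂ (Cn n) := LinearMap.ker (α - 1)

/-- A linear reflection of order k on ℂⁿ: an endomorphism of finite order
exactly k whose fixed subspace is a hyperplane. -/
def IsLinRefl {n : ℕ} (α : EndC n) (k : ℕ) : Prop :=
  orderOf α = k ∧ Module.finrank ℂ (FixL α) = n - 1

/-- A transversal family of linear reflections: the fixed hyperplanes are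
pairwise transversal and their intersection has codimension s. -/
def TransversalFamily {n s : ℕ} (α : Fin s → EndC n) : Prop :=
  (∀ i j, i ≠ j → FixL (α i) ⊔ FixL (α j) = ⊤) ∧
  Module.finrank ℂ (⨅ i, FixL (α i) : Submodule ℂ (Cn n)) = n - s

/-- The matrix of the linear reflection
β(x) = (x₁ + a₁xᵢ, …, λxᵢ, …, xₙ + aₙxᵢ) (i-th coordinate λxᵢ, j-th coordinate
xⱼ + aⱼxᵢ for j ≠ i), acting on column vectors. -/
def reflMat (n : ℕ) (i : Fin n) (lam : ℂ) (a : Fin n → ℂ) : Matrix (Fin n) (Fin n) ℂ :=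
  fun j kk => if j = i then (if kk = i then lam else 0)
    else if kk = j then 1 else if kk = i then a j else 0

private lemma mulB_apply {n : ℕ} (i : Fin n) (lam : ℂ) (b : Fin n → ℂ)
    (C : Matrix (Fin n) (Fin n) ℂ) (j kk : Fin n) :
    (reflMat n i lam b * C) j kk =
      if j = i then lam * C i kk else C j kk + b j * C i kk := by
  rw [Matrix.mul_apply]
  by_cases hj : j = i
  · subst hj
    rw [if_pos rfl, Finset.sum_eq_single j (fun m _ hm => by simp [reflMat, hm])
      (by simp)]
    simp [reflMat]
  · rw [if_neg hj]
    calc ∑ m, reflMat n i lam b j m * C m kk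
        = ∑ m, ((if m = j then (1:ℂ) else 0) * C m kk + (if m = i then b j else 0) * C m kk) := by
          refine Finset.sum_congr rfl fun m _ => ?_
          by_cases h1 : m = j <;> by_cases h2 : m = i <;> simp_all [reflMat]
      _ = C j kk + b j * C i kk := by
          rw [Finset.sum_add_distrib]
          simp [Finset.sum_ite_eq', ite_mul]

private lemma mulA_apply {n : ℕ} (i : Fin n) (lam : ℂ) (a : Fin n → ℂ)
    (C : Matrix (Fin n) (Fin n) ℂ) (j kk : Fin n) :
    (C * reflMat n i lam a) j kk =
      if kk = i then lam * C j i + ∑ m ∈ Finset.univ.erase i, a m * C j m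
      else C j kk := by
  rw [Matrix.mul_apply]
  by_cases hk : kk = i
  · rw [if_pos hk, ← Finset.add_sum_erase _ _ (Finset.mem_univ i)]
    congr 1
    · simp [reflMat, hk, mul_comm]
    · refine Finset.sum_congr rfl fun m hm => ?_
      have hm' : m ≠ i := Finset.ne_of_mem_erase hm
      simp [reflMat, hm', Ne.symm hm', hk, mul_comm]
  · rw [if_neg hk, Finset.sum_eq_single kk ?_ (by simp)]
    · simp [reflMat, hk]
    · intro m _ hm
      by_cases hmi : m = i <;> simp [reflMat, hmi, hk, (Ne.symm hm : kk ≠ m)]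

private lemma comm_iff {n : ℕ} (i : Fin n) (lam : ℂ) (hlam : lam ≠ 1)
    (a b : Fin n → ℂ) (C : Matrix (Fin n) (Fin n) ℂ) :
    reflMat n i lam b * C = C * reflMat n i lam a ↔
    ((∀ kk, kk ≠ i → C i kk = 0) ∧
     ∀ j, j ≠ i → b j * C i i
        = (lam - 1) * C j i + ∑ m ∈ Finset.univ.erase i, a m * C j m) := by
  constructor
  · intro h
    have h' : ∀ j kk, (reflMat n i lam b * C) j kk = (C * reflMat n i lam a) j kk :=
      fun j kk => by rw [h]
    constructor
    · intro kk hkk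
      have hh := h' i kk
      rw [mulB_apply, mulA_apply, if_pos rfl, if_neg hkk] at hh
      have h2 : (lam - 1) * C i kk = 0 := by linear_combination hh
      rcases mul_eq_zero.mp h2 with h3 | h3
      · exact absurd (by linear_combination h3) hlam
      · exact h3
    · intro j hj
      have hh := h' j i
      rw [mulB_apply, mulA_apply, if_neg hj, if_pos rfl] at hh
      linear_combination hh
  · rintro ⟨h1, h2⟩
    ext j kk
    rw [mulB_apply, mulA_apply]
    by_cases hj : j = i <;> by_cases hk : kk = i
    · subst hj; subst hk
      rw [if_pos rfl, if_pos rfl,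
        Finset.sum_eq_zero fun m hm => by rw [h1 m (Finset.ne_of_mem_erase hm), mul_zero]]
      ring
    · subst hj
      rw [if_pos rfl, if_neg hk, h1 kk hk, mul_zero]
    · subst hk
      rw [if_neg hj, if_pos rfl]
      linear_combination h2 j hj
    · rw [if_neg hj, if_neg hk, h1 kk hk, mul_zero, add_zero]

private lemma diag_ne {n : ℕ} (C : Matrix (Fin n) (Fin n) ℂ) (hC : IsUnit C)
    (i : Fin n) (h : ∀ kk, kk ≠ i → C i kk = 0) : C i i ≠ 0 := by
  have hdet : IsUnit C.det := (Matrix.isUnit_iff_isUnit_det C).mp hC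
  have hinv : C * C⁻¹ = 1 := Matrix.mul_nonsing_inv C hdet
  have h1 : (C * C⁻¹) i i = 1 := by rw [hinv]; simp
  rw [Matrix.mul_apply,
    Finset.sum_eq_single i (fun m _ hm => by rw [h m hm, zero_mul]) (by simp)] at h1
  intro h0; rw [h0, zero_mul] at h1; exact one_ne_zero h1.symm

/-- Theorem 4.9: recognition of equivalent transversal s-tuples
of linear reflections in pre-normal form, in terms of the conjugating matrix C. -/
theorem stmt_13 (n s : ℕ) (hn : 2 ≤ n) (hs : s ≤ n) (hs1 : 1 ≤ s)
    (k : Fin s → ℕ) (hk : ∀ i, 2 ≤ k i)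
    (lam : Fin s → ℂ) (hlam : ∀ i, IsPrimitiveRoot (lam i) (k i))
    (a b : Fin s → Fin n → ℂ) :
    (∃ C : Matrix (Fin n) (Fin n) ℂ, IsUnit C ∧
      ∀ i : Fin s, reflMat n (Fin.castLE hs i) (lam i) (b i) * C
        = C * reflMat n (Fin.castLE hs i) (lam i) (a i))
    ↔
    (∃ C : Matrix (Fin n) (Fin n) ℂ, IsUnit C ∧
      (∀ i : Fin s, ∀ j : Fin n, j ≠ Fin.castLE hs i → C (Fin.castLE hs i) j = 0) ∧
      C (Fin.castLE hs ⟨0, hs1⟩) (Fin.castLE hs ⟨0, hs1⟩) = 1 ∧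
      (∀ i j : Fin s, j ≠ i →
        b i (Fin.castLE hs j)
          = C (Fin.castLE hs j) (Fin.castLE hs j) / C (Fin.castLE hs i) (Fin.castLE hs i)
            * a i (Fin.castLE hs j)) ∧
      (∀ j : Fin n, s ≤ (j : ℕ) →
        b ⟨0, hs1⟩ j = (lam ⟨0, hs1⟩ - 1) * C j (Fin.castLE hs ⟨0, hs1⟩)
          + ∑ kk ∈ Finset.univ.erase (Fin.castLE hs ⟨0, hs1⟩), a ⟨0, hs1⟩ kk * C j kk) ∧
      (∀ i : Fin s, 1 ≤ (i : ℕ) → ∀ j : Fin n, s ≤ (j : ℕ) →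
        b i j = (1 / C (Fin.castLE hs i) (Fin.castLE hs i))
          * ((lam i - 1) * C j (Fin.castLE hs i)
            + ∑ kk ∈ Finset.univ.erase (Fin.castLE hs i), a i kk * C j kk))) := by
  have hlamne : ∀ i : Fin s, lam i ≠ 1 := fun i => (hlam i).ne_one (hk i)
  have hinj : ∀ i j : Fin s, i ≠ j → Fin.castLE hs i ≠ Fin.castLE hs j :=
    fun i j hij h => hij (Fin.castLE_injective hs h)
  constructor
  · rintro ⟨C, hC, hcomm⟩
    have hrow0 : ∀ i : Fin s, ∀ kk, kk ≠ Fin.castLE hs i → C (Fin.castLE hs i) kk = 0 :=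
      fun i => ((comm_iff _ _ (hlamne i) _ _ C).mp (hcomm i)).1
    set δ := C (Fin.castLE hs ⟨0, hs1⟩) (Fin.castLE hs ⟨0, hs1⟩) with hδdef
    have hδ : δ ≠ 0 := diag_ne C hC _ (hrow0 ⟨0, hs1⟩)
    have hdetC : C.det ≠ 0 := by
      rw [← isUnit_iff_ne_zero, ← Matrix.isUnit_iff_isUnit_det]; exact hC
    have hC' : IsUnit (δ⁻¹ • C) := by
      rw [Matrix.isUnit_iff_isUnit_det, Matrix.det_smul, isUnit_iff_ne_zero]
      exact mul_ne_zero (pow_ne_zero _ (inv_ne_zero hδ)) hdetC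
    have hcomm' : ∀ i : Fin s,
        reflMat n (Fin.castLE hs i) (lam i) (b i) * (δ⁻¹ • C)
          = (δ⁻¹ • C) * reflMat n (Fin.castLE hs i) (lam i) (a i) := by
      intro i; rw [Matrix.mul_smul, Matrix.smul_mul, hcomm i]
    have hrow' : ∀ i : Fin s, ∀ kk, kk ≠ Fin.castLE hs i →
        (δ⁻¹ • C) (Fin.castLE hs i) kk = 0 :=
      fun i => ((comm_iff _ _ (hlamne i) _ _ _).mp (hcomm' i)).1
    have heq' : ∀ i : Fin s, ∀ j, j ≠ Fin.castLE hs i →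
        b i j * (δ⁻¹ • C) (Fin.castLE hs i) (Fin.castLE hs i)
          = (lam i - 1) * (δ⁻¹ • C) j (Fin.castLE hs i)
            + ∑ m ∈ Finset.univ.erase (Fin.castLE hs i), a i m * (δ⁻¹ • C) j m :=
      fun i => ((comm_iff _ _ (hlamne i) _ _ _).mp (hcomm' i)).2
    have hdiag' : ∀ i : Fin s,
        (δ⁻¹ • C) (Fin.castLE hs i) (Fin.castLE hs i) ≠ 0 :=
      fun i => diag_ne _ hC' _ (hrow' i)
    have hnorm : (δ⁻¹ • C) (Fin.castLE hs ⟨0, hs1⟩) (Fin.castLE hs ⟨0, hs1⟩) = 1 := by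
      simp only [Matrix.smul_apply, smul_eq_mul, ← hδdef]
      exact inv_mul_cancel₀ hδ
    refine ⟨δ⁻¹ • C, hC', hrow', hnorm, ?_, ?_, ?_⟩
    · intro i j hji
      have hne : Fin.castLE hs j ≠ Fin.castLE hs i := hinj j i hji
      have h := heq' i (Fin.castLE hs j) hne
      have hsum : ∑ m ∈ Finset.univ.erase (Fin.castLE hs i),
          a i m * (δ⁻¹ • C) (Fin.castLE hs j) m
          = a i (Fin.castLE hs j) * (δ⁻¹ • C) (Fin.castLE hs j) (Fin.castLE hs j) :=
        Finset.sum_eq_single_of_mem _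
          (Finset.mem_erase.mpr ⟨hne, Finset.mem_univ _⟩)
          (fun m _ hm => by rw [hrow' j m hm, mul_zero])
      rw [hrow' j (Fin.castLE hs i) (Ne.symm hne), hsum] at h
      rw [div_mul_eq_mul_div, eq_div_iff (hdiag' i)]
      linear_combination h
    · intro j hj
      have hne : j ≠ Fin.castLE hs ⟨0, hs1⟩ := by
        intro h; rw [h] at hj; simp at hj; omega
      have h := heq' ⟨0, hs1⟩ j hne
      rw [hnorm, mul_one] at h
      exact h
    · intro i h1i j hj
      have hne : j ≠ Fin.castLE hs i := by
        intro h; rw [h] at hj; simp at hj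
        exact absurd hj (not_le.mpr i.isLt)
      have h := heq' i j hne
      rw [one_div_mul_eq_div, eq_div_iff (hdiag' i)]
      linear_combination h
  · rintro ⟨C, hC, hrow, hnorm, hb1, hb2, hb3⟩
    have hdiag : ∀ i : Fin s, C (Fin.castLE hs i) (Fin.castLE hs i) ≠ 0 :=
      fun i => diag_ne C hC _ (hrow i)
    refine ⟨C, hC, fun i => (comm_iff _ _ (hlamne i) _ _ C).mpr ⟨hrow i, ?_⟩⟩
    intro j hj
    by_cases hjs : (j : ℕ) < s
    · set j' : Fin s := ⟨(j : ℕ), hjs⟩ with hj'def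
      have hcast : Fin.castLE hs j' = j := by ext; rfl
      have hne : j' ≠ i := fun h => hj (by rw [← hcast, h])
      have h1 := hb1 i j' hne
      rw [hcast] at h1
      have hji : C j (Fin.castLE hs i) = 0 := by
        rw [← hcast]
        exact hrow j' _ (by rw [hcast]; exact Ne.symm hj)
      have hsum : ∑ m ∈ Finset.univ.erase (Fin.castLE hs i), a i m * C j m
          = a i j * C j j := by
        rw [← hcast]
        exact Finset.sum_eq_single_of_mem _
          (Finset.mem_erase.mpr ⟨by rw [hcast]; exact hj, Finset.mem_univ _⟩)
          (fun m _ hm => by rw [hrow j' m hm, mul_zero])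
      rw [hji, hsum, h1]
      field_simp [hdiag i]
      ring
    · push_neg at hjs
      by_cases hi0 : (i : ℕ) = 0
      · have hieq : i = ⟨0, hs1⟩ := Fin.ext hi0
        subst hieq
        rw [hnorm, mul_one]
        exact hb2 j hjs
      · have h1i : 1 ≤ (i : ℕ) := Nat.one_le_iff_ne_zero.mpr hi0
        rw [hb3 i h1i j hjs]
        field_simp [hdiag i]
end
end

section
/- Let n ≥ 2, let k₁, k₂ ≥ 2, let λ₁, λ₂ be primitive k₁-th and k₂-th roots of unity, and let a_{1j} (2 ≤ j ≤ n) and a_{2j} (j = 1 or 3 ≤ j ≤ n) be complex numbers. Define the transversal pair of linear reflections β₁(x) = (λ₁x₁, x₂ + a_{12}x₁, x₃ + a_{13}x₁, …, xₙ + a_{1n}x₁) and β₂(x) = (x₁ + a_{21}x₂, λ₂x₂, x₃ + a_{23}x₂, …, xₙ + a_{2n}x₂). Assume β₁ and β₂ do not commute (equivalently (a_{12}, a_{21}) ≠ (0,0)) and that a_{12}a_{21} ≠ (λ₁ − 1)(λ₂ − 1). Then: if a_{21} = 0, the pair (β₁, β₂) is equivalent to (γ₁, γ₂) with γ₁(x)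 = (λ₁x₁, x₁ + x₂, x₃, …, xₙ) and γ₂(x) = (x₁, λ₂x₂, x₃, …, xₙ); and if a_{21} ≠ 0, the pair (β₁, β₂) is equivalent to (γ₁, γ₂) with γ₁(x) = (λ₁x₁, a_{12}a_{21}x₁ + x₂, x₃, …, xₙ) and γ₂(x) = (x₁ + x₂, λ₂x₂, x₃, …, xₙ). -/
/-!
Both reflections and both normal forms are block lower triangular for the splitting
`(x₁, x₂ | x₃, …, xₙ)`, so we look for the conjugating map among the maps
`P x = (s x₁, t x₂, x_j + u_j x₁ + v_j x₂)`. Comparing the `2 × 2` blocks of `βᵢ ∘ P` and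
`P ∘ γᵢ` fixes `s` and `t`; each remaining row `j` gives a linear system in `(u_j, v_j)`.
If `a₂₁ = 0`, then `a₁₂ ≠ 0` by non-commutation, `(s, t) = (1, a₁₂)` and the system is
triangular with pivots `λ₁ - 1`, `λ₂ - 1`, which are nonzero as `λᵢ ≠ 1`. If `a₂₁ ≠ 0`, then
`(s, t) = (a₂₁, 1)` and the system has determinant `a₁₂ a₂₁ - (λ₁ - 1)(λ₂ - 1) ≠ 0`.
-/

noncomputable section

open Filter Function

section

variable (K : Type*) {V : Type*} [Semiring K] [AddCommMonoid V] [Module K V]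

def PairEquiv (β₁ β₂ γ₁ γ₂ : V → V) : Prop :=
  ∃ h : V ≃ₗ[K] V, (∀ x, h (β₁ (h.symm x)) = γ₁ x) ∧ ∀ x, h (β₂ (h.symm x)) = γ₂ x

variable {K}

lemma PairEquiv.of_comp_eq {β₁ β₂ γ₁ γ₂ : V → V} (P : V ≃ₗ[K] V)
    (h₁ : ∀ x, β₁ (P x) = P (γ₁ x)) (h₂ : ∀ x, β₂ (P x) = P (γ₂ x)) :
    PairEquiv K β₁ β₂ γ₁ γ₂ :=
  ⟨P.symm, fun x => by simp [h₁], fun x => by simp [h₂]⟩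

end

section

variable {K ι : Type*} [Field K] [DecidableEq ι]

def reflAt (i : ι) (lam : K) (a x : ι → K) : ι → K :=
  fun j => if j = i then lam * x i else x j + a j * x i

def scaleShear (i₀ i₁ : ι) (s t : K) (u v : ι → K) : (ι → K) →ₗ[K] ι → K where
  toFun x j := if j = i₀ then s * x i₀ else if j = i₁ then t * x i₁
    else x j + u j * x i₀ + v j * x i₁
  map_add' x y := by ext j; simp only [Pi.add_apply]; split_ifs <;> ring
  map_smul' c x := by
    ext j; simp only [Pi.smul_apply, smul_eq_mul, RingHom.id_apply]; split_ifs <;> ring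

variable {i₀ i₁ : ι} {s t lam lam₁ lam₂ c : K} {a a₁ a₂ u v : ι → K}

lemma scaleShear_apply (x : ι → K) (j : ι) :
    scaleShear i₀ i₁ s t u v x j = if j = i₀ then s * x i₀ else if j = i₁ then t * x i₁
      else x j + u j * x i₀ + v j * x i₁ := rfl

lemma scaleShear_swap (hi : i₀ ≠ i₁) : scaleShear i₀ i₁ s t u v = scaleShear i₁ i₀ t s v u := by
  ext x j
  simp only [scaleShear_apply]
  split_ifs <;> first | exact absurd (‹j = i₀›.symm.trans ‹j = i₁›) hi | ring

lemma scaleShear_injective (hi : i₀ ≠ i₁) (hs : s ≠ 0) (ht : t ≠ 0) :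
    Injective (scaleShear i₀ i₁ s t u v) := by
  refine (injective_iff_map_eq_zero _).2 fun x hx => ?_
  have hx₀ : x i₀ = 0 := by simpa [scaleShear_apply, hs] using congrFun hx i₀
  have hx₁ : x i₁ = 0 := by simpa [scaleShear_apply, hi.symm, ht] using congrFun hx i₁
  ext j
  by_cases h₀ : j = i₀
  · rw [h₀, hx₀]; rfl
  by_cases h₁ : j = i₁
  · rw [h₁, hx₁]; rfl
  simpa [scaleShear_apply, h₀, h₁, hx₀, hx₁] using congrFun hx j

lemma reflAt_scaleShear (hi : i₀ ≠ i₁) (hc : a i₁ * s = t * c)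
    (h : ∀ j, j ≠ i₀ → j ≠ i₁ → u j + a j * s = lam * u j + c * v j) (x : ι → K) :
    reflAt i₀ lam a (scaleShear i₀ i₁ s t u v x) =
      scaleShear i₀ i₁ s t u v (reflAt i₀ lam (Pi.single i₁ c) x) := by
  ext j
  by_cases h₀ : j = i₀
  · subst h₀; simp [reflAt, scaleShear_apply]; ring
  by_cases h₁ : j = i₁
  · subst h₁; simp [reflAt, scaleShear_apply, h₀]; linear_combination x i₀ * hc
  · simp [reflAt, scaleShear_apply, h₀, h₁, hi.symm]
    linear_combination x i₀ * h j h₀ h₁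


lemma reflAt_comp_reflAt_comm (hi : i₀ ≠ i₁) (h₁ : a₁ i₁ = 0) (h₀ : a₂ i₀ = 0) :
    reflAt i₀ lam₁ a₁ ∘ reflAt i₁ lam₂ a₂ = reflAt i₁ lam₂ a₂ ∘ reflAt i₀ lam₁ a₁ := by
  ext x j
  by_cases hj₀ : j = i₀
  · subst hj₀; simp [reflAt, hi, h₀]
  by_cases hj₁ : j = i₁
  · subst hj₁; simp [reflAt, hi.symm, h₁]
  · simp [reflAt, hj₀, hj₁, hi, hi.symm, h₀, h₁]; ring

variable [Finite ι]

lemma pairEquiv_of_scaleShear {c₁ c₂ : K} (hi : i₀ ≠ i₁) (hs : s ≠ 0) (ht : t ≠ 0)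
    (hc₁ : a₁ i₁ * s = t * c₁) (hc₂ : a₂ i₀ * t = s * c₂)
    (hu : ∀ j, j ≠ i₀ → j ≠ i₁ → u j + a₁ j * s = lam₁ * u j + c₁ * v j)
    (hv : ∀ j, j ≠ i₀ → j ≠ i₁ → v j + a₂ j * t = lam₂ * v j + c₂ * u j) :
    PairEquiv K (reflAt i₀ lam₁ a₁) (reflAt i₁ lam₂ a₂)
      (reflAt i₀ lam₁ (Pi.single i₁ c₁)) (reflAt i₁ lam₂ (Pi.single i₀ c₂)) := by
  refine .of_comp_eq (.ofInjectiveEndo _ (scaleShear_injective hi hs ht))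
    (reflAt_scaleShear hi hc₁ hu) fun x => ?_
  rw [LinearEquiv.coe_ofInjectiveEndo, scaleShear_swap hi]
  exact reflAt_scaleShear hi.symm hc₂ (fun j h₁ h₀ => hv j h₀ h₁) x

lemma pairEquiv_reflAt_of_eq_zero (hi : i₀ ≠ i₁) (hlam₁ : lam₁ ≠ 1) (hlam₂ : lam₂ ≠ 1)
    (hA : a₁ i₁ ≠ 0) (hB : a₂ i₀ = 0) :
    PairEquiv K (reflAt i₀ lam₁ a₁) (reflAt i₁ lam₂ a₂)
      (reflAt i₀ lam₁ (Pi.single i₁ 1)) (reflAt i₁ lam₂ 0) := by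
  set v : ι → K := fun j => a₁ i₁ * a₂ j / (lam₂ - 1)
  set u : ι → K := fun j => (a₁ j - v j) / (lam₁ - 1)
  have hv : ∀ j, v j * (lam₂ - 1) = a₁ i₁ * a₂ j := fun j => div_mul_cancel₀ _ (sub_ne_zero.2 hlam₂)
  have hu : ∀ j, u j * (lam₁ - 1) = a₁ j - v j := fun j => div_mul_cancel₀ _ (sub_ne_zero.2 hlam₁)
  rw [← Pi.single_zero i₀]
  refine pairEquiv_of_scaleShear (u := u) (v := v) hi one_ne_zero hA (by ring) (by simp [hB])
    (fun j _ _ => by linear_combination -hu j) fun j _ _ => by linear_combination -hv j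

lemma pairEquiv_reflAt_of_ne_zero (hi : i₀ ≠ i₁) (hB : a₂ i₀ ≠ 0)
    (hD : a₁ i₁ * a₂ i₀ ≠ (lam₁ - 1) * (lam₂ - 1)) :
    PairEquiv K (reflAt i₀ lam₁ a₁) (reflAt i₁ lam₂ a₂)
      (reflAt i₀ lam₁ (Pi.single i₁ (a₁ i₁ * a₂ i₀))) (reflAt i₁ lam₂ (Pi.single i₀ 1)) := by
  set D := a₁ i₁ * a₂ i₀ - (lam₁ - 1) * (lam₂ - 1)
  set v : ι → K := fun j => (a₁ j * a₂ i₀ - (lam₁ - 1) * a₂ j) / D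
  have hv : ∀ j, v j * D = a₁ j * a₂ i₀ - (lam₁ - 1) * a₂ j :=
    fun j => div_mul_cancel₀ _ (sub_ne_zero.2 hD)
  refine pairEquiv_of_scaleShear (u := fun j => a₂ j - (lam₂ - 1) * v j) (v := v) hi hB
    one_ne_zero (by ring) (by ring) (fun j _ _ => ?_) fun j _ _ => by ring
  linear_combination -hv j

end

/-- Theorem 4.19(i): normal forms for a non-commuting
transversal pair of linear reflections in pre-normal form with
a₁₂a₂₁ ≠ (λ₁−1)(λ₂−1). -/
theorem stmt_17 (n : ℕ) (hn : 2 ≤ n) (k₁ k₂ : ℕ) (hk₁ : 2 ≤ k₁) (hk₂ : 2 ≤ k₂)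
    (lam₁ lam₂ : ℂ) (hl₁ : IsPrimitiveRoot lam₁ k₁) (hl₂ : IsPrimitiveRoot lam₂ k₂)
    (a₁ a₂ : Fin n → ℂ)
    (β₁ β₂ : Cn n → Cn n)
    (hβ₁ : β₁ = fun x : Cn n => fun j : Fin n =>
      if j = (⟨0, by omega⟩ : Fin n) then lam₁ * x ⟨0, by omega⟩
      else x j + a₁ j * x ⟨0, by omega⟩)
    (hβ₂ : β₂ = fun x : Cn n => fun j : Fin n =>
      if j = (⟨1, by omega⟩ : Fin n) then lam₂ * x ⟨1, by omega⟩
      else x j + a₂ j * x ⟨1, by omega⟩)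
    (hnc : β₁ ∘ β₂ ≠ β₂ ∘ β₁)
    (hne : a₁ ⟨1, by omega⟩ * a₂ ⟨0, by omega⟩ ≠ (lam₁ - 1) * (lam₂ - 1)) :
    (a₂ ⟨0, by omega⟩ = 0 →
      ∃ h : Cn n ≃ₗ[ℂ] Cn n,
        (∀ x : Cn n, h (β₁ (h.symm x)) = fun j : Fin n =>
          if j = (⟨0, by omega⟩ : Fin n) then lam₁ * x ⟨0, by omega⟩
          else if j = (⟨1, by omega⟩ : Fin n) then x ⟨0, by omega⟩ + x ⟨1, by omega⟩
          else x j) ∧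
        (∀ x : Cn n, h (β₂ (h.symm x)) = fun j : Fin n =>
          if j = (⟨1, by omega⟩ : Fin n) then lam₂ * x ⟨1, by omega⟩ else x j)) ∧
    (a₂ ⟨0, by omega⟩ ≠ 0 →
      ∃ h : Cn n ≃ₗ[ℂ] Cn n,
        (∀ x : Cn n, h (β₁ (h.symm x)) = fun j : Fin n =>
          if j = (⟨0, by omega⟩ : Fin n) then lam₁ * x ⟨0, by omega⟩
          else if j = (⟨1, by omega⟩ : Fin n) then
            a₁ ⟨1, by omega⟩ * a₂ ⟨0, by omega⟩ * x ⟨0, by omega⟩ + x ⟨1, by omega⟩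
          else x j) ∧
        (∀ x : Cn n, h (β₂ (h.symm x)) = fun j : Fin n =>
          if j = (⟨0, by omega⟩ : Fin n) then x ⟨0, by omega⟩ + x ⟨1, by omega⟩
          else if j = (⟨1, by omega⟩ : Fin n) then lam₂ * x ⟨1, by omega⟩
          else x j)) := by
  set i₀ : Fin n := ⟨0, by omega⟩
  set i₁ : Fin n := ⟨1, by omega⟩
  obtain rfl : β₁ = reflAt i₀ lam₁ a₁ := hβ₁
  obtain rfl : β₂ = reflAt i₁ lam₂ a₂ := hβ₂
  have hi : i₀ ≠ i₁ := by simp [i₀, i₁, Fin.ext_iff]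
  refine ⟨fun hB => ?_, fun hB => ?_⟩
  · obtain ⟨h, h₁, h₂⟩ := pairEquiv_reflAt_of_eq_zero hi (hl₁.ne_one (by omega))
      (hl₂.ne_one (by omega)) (fun hA => hnc (reflAt_comp_reflAt_comm hi hA hB)) hB
    refine ⟨h, fun x => (h₁ x).trans ?_, fun x => (h₂ x).trans ?_⟩ <;>
      funext j <;> simp only [reflAt, Pi.single_apply] <;> split_ifs <;> simp_all [add_comm]
  · obtain ⟨h, h₁, h₂⟩ := pairEquiv_reflAt_of_ne_zero hi hB hne
    refine ⟨h, fun x => (h₁ x).trans ?_, fun x => (h₂ x).trans ?_⟩ <;>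
      funext j <;> simp only [reflAt, Pi.single_apply] <;> split_ifs <;> simp_all [add_comm]
end
end

section
/- Let n ≥ 3, let k₁, k₂ ≥ 2, let λ₁, λ₂ be primitive k₁-th and k₂-th roots of unity, and let a_{1j} (2 ≤ j ≤ n) and a_{2j} (j = 1 or 3 ≤ j ≤ n) be complex numbers. Define the transversal pair of linear reflections β₁(x) = (λ₁x₁, x₂ + a_{12}x₁, x₃ + a_{13}x₁, …, xₙ + a_{1n}x₁) and β₂(x) = (x₁ + a_{21}x₂, λ₂x₂, x₃ + a_{23}x₂, …, xₙ + a_{2n}x₂). Assume β₁ and β₂ do not commute (equivalently (a_{12}, a_{21}) ≠ (0,0)) and that a_{12}a_{21} = (λ₁ − 1)(λ₂ − 1). Then: if (a_{23}, …, a_{2n}) = (a_{21}/(λ₁ − 1))·(a_{13}, …, a_{1n}), the pair (β₁, β₂) is equivalent to (γ₁, γ₂) with γ₁(x) = (λ₁x₁, (λ₁ − 1)(λ₂ − 1)x₁ + x₂, x₃, …, xₙ) and γ₂(x) = (x₁ + x₂, λ₂x₂, x₃, …, xₙ); and if (a_{23}, …, a_{2n}) ≠ (a_{21}/(λ₁ −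 1))·(a_{13}, …, a_{1n}), the pair (β₁, β₂) is equivalent to (γ₁, γ₂) with γ₁(x) = (λ₁x₁, (λ₁ − 1)(λ₂ − 1)x₁ + x₂, x₃, …, xₙ) and γ₂(x) = (x₁ + x₂, λ₂x₂, x₂ + x₃, x₄, …, xₙ). -/
noncomputable section

open Filter Function

/-!
Each βᵢ is an elementary map `x ↦ x + xᵢ • wᵢ`, with `w₁ = (λ₁ - 1, a₁₂, …, a₁ₙ)` and
`w₂ = (a₂₁, λ₂ - 1, a₂₃, …, a₂ₙ)`, and so are the normal forms, with vectors
`u₁ = (λ₁ - 1) e₁ + c e₂` and `u₂ = e₁ + (λ₂ - 1) e₂ (+ e₃)`, where `c = (λ₁ - 1)(λ₂ - 1)`.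
Since `g⁻¹ ∘ (id + φ ⊗ w) ∘ g = id + (φ ∘ g) ⊗ g⁻¹ w`, an automorphism `g` conjugates the pairs
as soon as `x₁ ∘ g = x₁`, `x₂ ∘ g = t x₂`, `g u₁ = w₁` and `g u₂ = t w₂` for one scalar `t`.
The shear fixing `eⱼ` for `j ≠ 2` and sending `e₂` to `(w₁ - (λ₁ - 1) e₁) / c` meets the first
three conditions with `t = a₁₂ / c`, and misses the last one by `δ / c`, where
`δ = a₁₂ w₂ - (λ₂ - 1) w₁`. The vector `δ` lies in the common fixed space `x₁ = x₂ = 0` (its first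
entry is `a₁₂ a₂₁ - c = 0`) and vanishes exactly in the first case. Otherwise, precomposing the
shear with an automorphism that fixes `e₁`, `e₂`, `x₁`, `x₂` and sends `e₃` to `δ / c` turns the
defect into the extra term `e₃` of `u₂`.
-/

section Elementary

variable {R V : Type*} [CommSemiring R] [AddCommMonoid V] [Module R V]

def elementaryMap (φ : Module.Dual R V) (w : V) : V →ₗ[R] V :=
  LinearMap.id + φ.smulRight w

@[simp]
theorem elementaryMap_apply (φ : Module.Dual R V) (w x : V) :
    elementaryMap φ w x = x + φ x • w :=
  rfl

theorem elementaryMap_comp_eq_comp_elementaryMap {φ ψ : Module.Dual R V} {w u : V}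
    {g : V →ₗ[R] V} (t : R) (hφ : φ ∘ₗ g = t • ψ) (hu : g u = t • w) :
    elementaryMap φ w ∘ₗ g = g ∘ₗ elementaryMap ψ u := by
  ext x
  have hφx : φ (g x) = t * ψ x := LinearMap.congr_fun hφ x
  simp [hφx, hu, smul_smul, mul_comm]

end Elementary

section ElementaryEquiv

variable {K V : Type*} [Field K] [AddCommGroup V] [Module K V]

def elementaryEquiv (φ : Module.Dual K V) (w : V) (h : 1 + φ w ≠ 0) : V ≃ₗ[K] V :=
  .ofLinearMap (elementaryMap φ w) (elementaryMap (-(1 + φ w)⁻¹ • φ) w)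
    (by ext x; simp; field_simp; module)
    (by ext x; simp; field_simp; module)

@[simp]
theorem elementaryEquiv_apply (φ : Module.Dual K V) (w : V) (h : 1 + φ w ≠ 0) (x : V) :
    elementaryEquiv φ w h x = x + φ x • w :=
  rfl

end ElementaryEquiv

theorem LinearEquiv.symm_apply_apply_of_comp_eq {R V : Type*} [Semiring R] [AddCommMonoid V]
    [Module R V] {f f' : V →ₗ[R] V} {g : V ≃ₗ[R] V} (h : f ∘ₗ g = g ∘ₗ f') (x : V) :
    g.symm (f (g x)) = f' x := by
  have hx := LinearMap.congr_fun h x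
  simp only [LinearMap.comp_apply, LinearEquiv.coe_coe] at hx
  rw [hx, LinearEquiv.symm_apply_apply]

section Coordinates

variable {ι : Type*} [DecidableEq ι] {K : Type*} [Field K]

theorem exists_linearEquiv_apply_single_eq (s : Set ι) {p : ι} (hp : p ∉ s) {v : ι → K}
    (hv : v ≠ 0) (hvs : ∀ i ∈ s, v i = 0) :
    ∃ k : (ι → K) ≃ₗ[K] (ι → K), k (Pi.single p 1) = v ∧
      ∀ i ∈ s, (∀ x, k x i = x i) ∧ ∀ c, k (Pi.single i c) = Pi.single i c := by
  obtain ⟨j, hj⟩ : ∃ j, v j ≠ 0 := ne_iff.mp hv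
  have hjs : j ∉ s := fun h => hj (hvs j h)
  refine ⟨(LinearEquiv.funCongrLeft K K (Equiv.swap p j)).trans
    (elementaryEquiv (LinearMap.proj j) (v - Pi.single j 1) (by simpa using hj)), ?_, ?_⟩
  · ext m
    simp [Pi.single_apply, Equiv.swap_apply_eq_iff]
  · intro i hi
    have hip : i ≠ p := fun h => hp (h ▸ hi)
    have hij : i ≠ j := fun h => hjs (h ▸ hi)
    refine ⟨fun x => ?_, fun c => ?_⟩
    · simp [Equiv.swap_apply_of_ne_of_ne hip hij, hvs i hi, hij]
    · ext m
      simp [Pi.single_apply, Equiv.swap_apply_eq_iff, Equiv.swap_apply_of_ne_of_ne hip hij, hip.symm]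

theorem coe_elementaryMap_proj_update {R : Type*} [CommRing R] (i : ι) (μ : R) (a : ι → R) :
    ⇑(elementaryMap (LinearMap.proj i) (update a i (μ - 1))) =
      fun x : ι → R => fun j => if j = i then μ * x i else x j + a j * x i := by
  funext x j
  by_cases hj : j = i
  · subst hj; simp; ring
  · simp [hj, mul_comm]

variable {i₀ i₁ : ι} {w₁ w₂ : ι → K}

theorem exists_conj_elementaryMap_pair (h01 : i₀ ≠ i₁) (hw₁ : w₁ i₀ ≠ 0) (hw₂ : w₂ i₁ ≠ 0)
    (hw₁₁ : w₁ i₁ ≠ 0) (k : (ι → K) ≃ₗ[K] (ι → K))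
    (hk : ∀ i ∈ ({i₀, i₁} : Set ι), (∀ x, k x i = x i) ∧ ∀ c, k (Pi.single i c) = Pi.single i c)
    {r : ι → K} (hr : k r = (w₁ i₀ * w₂ i₁)⁻¹ • (w₁ i₁ • w₂ - w₂ i₁ • w₁)) :
    ∃ h : (ι → K) ≃ₗ[K] (ι → K),
      (∀ x, h (elementaryMap (LinearMap.proj i₀) w₁ (h.symm x)) =
        elementaryMap (LinearMap.proj i₀) (Pi.single i₀ (w₁ i₀) + Pi.single i₁ (w₁ i₀ * w₂ i₁)) x) ∧
      (∀ x, h (elementaryMap (LinearMap.proj i₁) w₂ (h.symm x)) =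
        elementaryMap (LinearMap.proj i₁) (Pi.single i₀ 1 + Pi.single i₁ (w₂ i₁) + r) x) := by
  set c := w₁ i₀ * w₂ i₁
  have hc : c ≠ 0 := mul_ne_zero hw₁ hw₂
  set q : ι → K := c⁻¹ • (w₁ - Pi.single i₀ (w₁ i₀))
  have hq₀ : q i₀ = 0 := by simp [q]
  have hq₁ : q i₁ = w₁ i₁ / c := by simp [q, h01.symm, div_eq_inv_mul]
  let g₁ := elementaryEquiv (LinearMap.proj i₁) (q - Pi.single i₁ 1) (by simp [hq₁, hw₁₁, hc])
  obtain ⟨⟨hk₀, hke₀⟩, ⟨hk₁, hke₁⟩⟩ := And.intro (hk i₀ (by simp)) (hk i₁ (by simp))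
  let g := k.trans g₁
  have hg₀ : ∀ x, g x i₀ = x i₀ := by simp [g, g₁, hq₀, hk₀, h01]
  have hg₁ : ∀ x, g x i₁ = q i₁ * x i₁ := by intro x; simp [g, g₁, hk₁]; ring
  have hgu₁ : g (Pi.single i₀ (w₁ i₀) + Pi.single i₁ c) = w₁ := by
    rw [LinearEquiv.trans_apply, map_add k, hke₀, hke₁, elementaryEquiv_apply]
    simp [q, h01, smul_sub, smul_smul, hc, ← Pi.single_smul']
  have hgu₂ : g (Pi.single i₀ 1 + Pi.single i₁ (w₂ i₁) + r) = q i₁ • w₂ := by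
    rw [LinearEquiv.trans_apply, map_add k, map_add k, hke₀, hke₁, hr, elementaryEquiv_apply, hq₁]
    ext j
    simp [q, Pi.single_apply, h01.symm]
    split_ifs <;> field_simp <;> ring
  refine ⟨g.symm, fun x => ?_, fun x => ?_⟩ <;> rw [LinearEquiv.symm_symm]
  · refine LinearEquiv.symm_apply_apply_of_comp_eq
      (elementaryMap_comp_eq_comp_elementaryMap 1 ?_ (by rw [one_smul]; exact hgu₁)) x
    ext x; simp [hg₀]
  · refine LinearEquiv.symm_apply_apply_of_comp_eq
      (elementaryMap_comp_eq_comp_elementaryMap (q i₁) ?_ hgu₂) x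
    ext x; simp [hg₁]

theorem smul_sub_smul_eq_zero_iff (hw₁ : w₁ i₀ ≠ 0) (hw₂ : w₂ i₁ ≠ 0)
    (hw : w₁ i₁ * w₂ i₀ = w₁ i₀ * w₂ i₁) :
    w₁ i₁ • w₂ - w₂ i₁ • w₁ = 0 ↔ ∀ j, j ≠ i₀ → j ≠ i₁ → w₂ j = w₂ i₀ / w₁ i₀ * w₁ j := by
  have hw₁₁ : w₁ i₁ ≠ 0 := left_ne_zero_of_mul (hw ▸ mul_ne_zero hw₁ hw₂)
  have key : ∀ j, w₁ i₁ * w₂ j - w₂ i₁ * w₁ j = 0 ↔ w₂ j = w₂ i₀ / w₁ i₀ * w₁ j := by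
    intro j
    rw [sub_eq_zero]
    constructor <;> intro h
    · field_simp
      refine mul_left_cancel₀ hw₁₁ ?_
      linear_combination w₁ i₀ * h - w₁ j * hw
    · rw [h]
      field_simp
      linear_combination w₁ j * hw
  simp only [funext_iff, Pi.sub_apply, Pi.smul_apply, smul_eq_mul, Pi.zero_apply]
  refine ⟨fun h j _ _ => (key j).mp (h j), fun h j => ?_⟩
  by_cases hj₀ : j = i₀
  · subst hj₀; linear_combination hw
  by_cases hj₁ : j = i₁
  · subst hj₁; ring
  exact (key j).mpr (h j hj₀ hj₁)

theorem exists_conj_elementaryMap_pair_of_smul_sub_smul_eq_zero (h01 : i₀ ≠ i₁)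
    (hw₁ : w₁ i₀ ≠ 0) (hw₂ : w₂ i₁ ≠ 0) (hδ : w₁ i₁ • w₂ - w₂ i₁ • w₁ = 0) :
    ∃ h : (ι → K) ≃ₗ[K] (ι → K),
      (∀ x, h (elementaryMap (LinearMap.proj i₀) w₁ (h.symm x)) =
        elementaryMap (LinearMap.proj i₀) (Pi.single i₀ (w₁ i₀) + Pi.single i₁ (w₁ i₀ * w₂ i₁)) x) ∧
      (∀ x, h (elementaryMap (LinearMap.proj i₁) w₂ (h.symm x)) =
        elementaryMap (LinearMap.proj i₁) (Pi.single i₀ 1 + Pi.single i₁ (w₂ i₁)) x) := by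
  have hw : w₁ i₁ * w₂ i₀ = w₁ i₀ * w₂ i₁ := by
    simpa [sub_eq_zero, mul_comm] using congr_fun hδ i₀
  have hw₁₁ : w₁ i₁ ≠ 0 := left_ne_zero_of_mul (hw ▸ mul_ne_zero hw₁ hw₂)
  simpa using exists_conj_elementaryMap_pair h01 hw₁ hw₂ hw₁₁ (LinearEquiv.refl K _) (by simp)
    (r := 0) (by simp [hδ])

theorem exists_conj_elementaryMap_pair_of_smul_sub_smul_ne_zero (h01 : i₀ ≠ i₁) {p : ι}
    (hp₀ : p ≠ i₀) (hp₁ : p ≠ i₁) (hw₁ : w₁ i₀ ≠ 0) (hw₂ : w₂ i₁ ≠ 0)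
    (hw : w₁ i₁ * w₂ i₀ = w₁ i₀ * w₂ i₁) (hδ : w₁ i₁ • w₂ - w₂ i₁ • w₁ ≠ 0) :
    ∃ h : (ι → K) ≃ₗ[K] (ι → K),
      (∀ x, h (elementaryMap (LinearMap.proj i₀) w₁ (h.symm x)) =
        elementaryMap (LinearMap.proj i₀) (Pi.single i₀ (w₁ i₀) + Pi.single i₁ (w₁ i₀ * w₂ i₁)) x) ∧
      (∀ x, h (elementaryMap (LinearMap.proj i₁) w₂ (h.symm x)) =
        elementaryMap (LinearMap.proj i₁) (Pi.single i₀ 1 + Pi.single i₁ (w₂ i₁) + Pi.single p 1) x) := by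
  have hw₁₁ : w₁ i₁ ≠ 0 := left_ne_zero_of_mul (hw ▸ mul_ne_zero hw₁ hw₂)
  obtain ⟨k, hkp, hk⟩ := exists_linearEquiv_apply_single_eq {i₀, i₁} (p := p) (by simp [hp₀, hp₁])
    (smul_ne_zero (inv_ne_zero (mul_ne_zero hw₁ hw₂)) hδ) (by simp [mul_comm, hw])
  exact exists_conj_elementaryMap_pair h01 hw₁ hw₂ hw₁₁ k hk hkp

end Coordinates

/-- Theorem 4.19(ii): normal forms for a non-commuting
transversal pair of linear reflections in pre-normal form with
a₁₂a₂₁ = (λ₁−1)(λ₂−1), n ≥ 3. -/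
theorem stmt_18 (n : ℕ) (hn : 3 ≤ n) (k₁ k₂ : ℕ) (hk₁ : 2 ≤ k₁) (hk₂ : 2 ≤ k₂)
    (lam₁ lam₂ : ℂ) (hl₁ : IsPrimitiveRoot lam₁ k₁) (hl₂ : IsPrimitiveRoot lam₂ k₂)
    (a₁ a₂ : Fin n → ℂ)
    (β₁ β₂ : Cn n → Cn n)
    (hβ₁ : β₁ = fun x : Cn n => fun j : Fin n =>
      if j = (⟨0, by omega⟩ : Fin n) then lam₁ * x ⟨0, by omega⟩
      else x j + a₁ j * x ⟨0, by omega⟩)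
    (hβ₂ : β₂ = fun x : Cn n => fun j : Fin n =>
      if j = (⟨1, by omega⟩ : Fin n) then lam₂ * x ⟨1, by omega⟩
      else x j + a₂ j * x ⟨1, by omega⟩)
    (heq : a₁ ⟨1, by omega⟩ * a₂ ⟨0, by omega⟩ = (lam₁ - 1) * (lam₂ - 1)) :
    ((∀ j : Fin n, 2 ≤ (j : ℕ) → a₂ j = a₂ ⟨0, by omega⟩ / (lam₁ - 1) * a₁ j) →
      ∃ h : Cn n ≃ₗ[ℂ] Cn n,
        (∀ x : Cn n, h (β₁ (h.symm x)) = fun j : Fin n =>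
          if j = (⟨0, by omega⟩ : Fin n) then lam₁ * x ⟨0, by omega⟩
          else if j = (⟨1, by omega⟩ : Fin n) then
            (lam₁ - 1) * (lam₂ - 1) * x ⟨0, by omega⟩ + x ⟨1, by omega⟩
          else x j) ∧
        (∀ x : Cn n, h (β₂ (h.symm x)) = fun j : Fin n =>
          if j = (⟨0, by omega⟩ : Fin n) then x ⟨0, by omega⟩ + x ⟨1, by omega⟩
          else if j = (⟨1, by omega⟩ : Fin n) then lam₂ * x ⟨1, by omega⟩
          else x j)) ∧
    (¬ (∀ j : Fin n, 2 ≤ (j : ℕ) → a₂ j = a₂ ⟨0, by omega⟩ / (lam₁ - 1) * a₁ j) →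
      ∃ h : Cn n ≃ₗ[ℂ] Cn n,
        (∀ x : Cn n, h (β₁ (h.symm x)) = fun j : Fin n =>
          if j = (⟨0, by omega⟩ : Fin n) then lam₁ * x ⟨0, by omega⟩
          else if j = (⟨1, by omega⟩ : Fin n) then
            (lam₁ - 1) * (lam₂ - 1) * x ⟨0, by omega⟩ + x ⟨1, by omega⟩
          else x j) ∧
        (∀ x : Cn n, h (β₂ (h.symm x)) = fun j : Fin n =>
          if j = (⟨0, by omega⟩ : Fin n) then x ⟨0, by omega⟩ + x ⟨1, by omega⟩
          else if j = (⟨1, by omega⟩ : Fin n) then lam₂ * x ⟨1, by omega⟩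
          else if j = (⟨2, by omega⟩ : Fin n) then x ⟨1, by omega⟩ + x ⟨2, by omega⟩
          else x j)) := by
  set i₀ : Fin n := ⟨0, by omega⟩
  set i₁ : Fin n := ⟨1, by omega⟩
  set i₂ : Fin n := ⟨2, by omega⟩
  obtain ⟨h01, h02, h12⟩ : i₀ ≠ i₁ ∧ i₀ ≠ i₂ ∧ i₁ ≠ i₂ := by simp [i₀, i₁, i₂]
  have hμ₁ : lam₁ - 1 ≠ 0 := sub_ne_zero.mpr (hl₁.ne_one hk₁)
  have hμ₂ : lam₂ - 1 ≠ 0 := sub_ne_zero.mpr (hl₂.ne_one hk₂)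
  obtain rfl := hβ₁.trans ((coe_elementaryMap_proj_update i₀ lam₁ a₁).symm)
  obtain rfl := hβ₂.trans ((coe_elementaryMap_proj_update i₁ lam₂ a₂).symm)
  set w₁ := update a₁ i₀ (lam₁ - 1)
  set w₂ := update a₂ i₁ (lam₂ - 1)
  have hw₁ : w₁ i₀ = lam₁ - 1 := by simp [w₁]
  have hw₂ : w₂ i₁ = lam₂ - 1 := by simp [w₂]
  have hw : w₁ i₁ * w₂ i₀ = w₁ i₀ * w₂ i₁ := by simpa [w₁, w₂, h01, h01.symm] using heq
  have hcase : (∀ j : Fin n, 2 ≤ (j : ℕ) → a₂ j = a₂ i₀ / (lam₁ - 1) * a₁ j) ↔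
      w₁ i₁ • w₂ - w₂ i₁ • w₁ = 0 := by
    rw [smul_sub_smul_eq_zero_iff (hw₁ ▸ hμ₁) (hw₂ ▸ hμ₂) hw]
    refine forall_congr' fun ⟨j, hj⟩ => ?_
    rcases j with _ | _ | j <;> simp [w₁, w₂, i₀, i₁]
  refine ⟨fun h => ?_, fun h => ?_⟩
  · obtain ⟨g, hg₁, hg₂⟩ := exists_conj_elementaryMap_pair_of_smul_sub_smul_eq_zero h01
      (hw₁ ▸ hμ₁) (hw₂ ▸ hμ₂) (hcase.mp h)
    refine ⟨g, fun x => (hg₁ x).trans ?_, fun x => (hg₂ x).trans ?_⟩ <;> funext j <;>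
      simp [hw₁, hw₂, Pi.single_apply] <;> split_ifs <;> simp_all <;> ring
  · obtain ⟨g, hg₁, hg₂⟩ := exists_conj_elementaryMap_pair_of_smul_sub_smul_ne_zero h01
      h02.symm h12.symm (hw₁ ▸ hμ₁) (hw₂ ▸ hμ₂) hw (mt hcase.mpr h)
    refine ⟨g, fun x => (hg₁ x).trans ?_, fun x => (hg₂ x).trans ?_⟩ <;> funext j <;>
      simp [hw₁, hw₂, Pi.single_apply] <;> split_ifs <;> simp_all <;> ring
end
end
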